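/- arXiv:2601.15990 — 7 statements merged into one kernel-verified Lean document; each statement's English description precedes it below -/
import Mathlib

section
/- (Vanishing of r^d·M and r^d·W at the origin for stationary mass functions.) Let d ≥ 5 be an integer. Let M, W : (0,∞) → ℝ be twice continuously differentiable, nonnegative, with M'(r) ≤ 0 and W'(r) ≤ 0 for all r > 0, such that r ↦ r^d·M(r) and r ↦ r^d·W(r) are nondecreasing on (0,∞), there exists r_* > 0 with r_*·M'(r_*) + d·M(r_*) > 0, and for all r > 0: M''(r) + ((d+1)/r)·M'(r) + r·M'(r)·W(r) + d·M(r)·W(r) = 0 and W''(r) + ((d+1)/r)·W'(r) + M(r) = 0. Then r^d·M(r) → 0 and r^d·W(r) → 0 as r → 0⁺. -/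
/-!
The density `u = r M' + d M` solves `u' = -r W u`, so `u r = u r_* · exp (∫_r^{r_*} t W)`, while
`(r^d M)' = r^{d-1} u`. A lower bound `W ≥ c r^{-(k+2)} - K` with `k ≥ 1` makes the exponent at least
`c' r^{-k} - B`, hence `(r^d M)' ≥ C / r` near `0`, and `r^d M → -∞` contradicts `M ≥ 0`.
The limits of the monotone functions `r^d M` and `r^d W` at `0⁺` exist. A positive limit of `r^d W`
gives such a bound with `k = d - 2`. A positive limit `L` of `r^d M` gives
`(r^{d+1} W')' = -r^{d+1} M ≤ -L r`, so `W' ≤ -(L/2) r^{1-d}` and `W ≥ c r^{2-d} - K`: the case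
`k = d - 4`, which is where `d ≥ 5` is needed.
-/

open Real Set Filter Topology MeasureTheory

theorem eq_mul_exp_integral_of_hasDerivAt {u a : ℝ → ℝ} (ha : ContinuousOn a (Ioi 0))
    (hu : ∀ r ∈ Ioi (0 : ℝ), HasDerivAt u (-(a r * u r)) r) {r s : ℝ} (hr : 0 < r)
    (hs : 0 < s) : u r = u s * exp (∫ t in r..s, a t) := by
  have hI : ∀ x ∈ Ioi (0 : ℝ), HasDerivAt (fun y => ∫ t in s..y, a t) (a x) x := fun x hx =>
    intervalIntegral.integral_hasDerivAt_right
      ((ha.mono fun t ht => (lt_min hs hx).trans_le ht.1).intervalIntegrable)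
      (ha.stronglyMeasurableAtFilter isOpen_Ioi x hx) (ha.continuousAt (isOpen_Ioi.mem_nhds hx))
  have hJ : ∀ x ∈ Ioi (0 : ℝ),
      HasDerivAt (fun y => u y * exp (∫ t in s..y, a t)) 0 x := fun x hx => by
    refine ((hu x hx).fun_mul (hI x hx).exp).congr_deriv ?_
    ring
  have hconst := isOpen_Ioi.is_const_of_deriv_eq_zero isPreconnected_Ioi
    (fun x hx => (hJ x hx).differentiableAt.differentiableWithinAt) (fun x hx => (hJ x hx).deriv)
    (mem_Ioi.2 hr) (mem_Ioi.2 hs)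
  rw [intervalIntegral.integral_same, exp_zero, mul_one, intervalIntegral.integral_symm, exp_neg,
    ← div_eq_mul_inv, div_eq_iff (exp_pos _).ne'] at hconst
  exact hconst

theorem sub_le_integral_of_div_pow_sub_le {f : ℝ → ℝ} {a b r s : ℝ} {k : ℕ} (hk : k ≠ 0)
    (hr : 0 < r) (hrs : r ≤ s) (hf : IntervalIntegrable f volume r s)
    (hle : ∀ t ∈ Icc r s, a / t ^ (k + 1) - b * t ≤ f t) :
    a / k * ((r ^ k)⁻¹ - (s ^ k)⁻¹) - b * (s ^ 2 - r ^ 2) / 2 ≤ ∫ t in r..s, f t := by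
  have hpos : ∀ t ∈ uIcc r s, 0 < t := fun t ht => hr.trans_le (by simpa [hrs] using ht.1)
  have hderiv : ∀ t ∈ uIcc r s, HasDerivAt (fun t => -(a / k) * (t ^ k)⁻¹ - b * t ^ 2 / 2)
      (a / t ^ (k + 1) - b * t) t := by
    intro t ht
    have ht0 := (hpos t ht).ne'
    refine ((((hasDerivAt_pow k t).inv (pow_ne_zero k ht0)).const_mul (-(a / k))).fun_sub
      (((hasDerivAt_pow 2 t).const_mul b).div_const 2)).congr_deriv ?_
    obtain ⟨j, rfl⟩ := Nat.exists_eq_add_one_of_ne_zero hk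
    simp only [Nat.add_sub_cancel]
    field_simp
    ring
  have hcont : ContinuousOn (fun t => a / t ^ (k + 1) - b * t) (uIcc r s) :=
    (continuousOn_const.div (continuousOn_pow _) fun t ht => pow_ne_zero _ (hpos t ht).ne').sub
      (continuousOn_const.mul continuousOn_id)
  calc a / k * ((r ^ k)⁻¹ - (s ^ k)⁻¹) - b * (s ^ 2 - r ^ 2) / 2
      = ∫ t in r..s, (a / t ^ (k + 1) - b * t) := by
        rw [intervalIntegral.integral_eq_sub_of_hasDerivAt hderiv hcont.intervalIntegrable]
        ring
    _ ≤ ∫ t in r..s, f t :=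
        intervalIntegral.integral_mono_on hrs hcont.intervalIntegrable hf hle

theorem div_pow_le_exp_div_pow {c r : ℝ} (hc : 0 ≤ c) {k : ℕ} (hk : k ≠ 0) (d : ℕ) (hr : 0 < r)
    (hr1 : r ≤ 1) : c ^ d / d.factorial / r ^ d ≤ exp (c / r ^ k) := by
  have hrk : r ^ k ≤ r := pow_le_of_le_one hr.le hr1 hk
  calc c ^ d / d.factorial / r ^ d ≤ c ^ d / d.factorial / (r ^ k) ^ d := by
        gcongr
    _ = (c / r ^ k) ^ d / d.factorial := by ring
    _ ≤ exp (c / r ^ k) := pow_div_factorial_le_exp _ (by positivity) d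

theorem tendsto_atBot_of_div_le_deriv {f f' : ℝ → ℝ} {C ε : ℝ} (hC : 0 < C) (hε : 0 < ε)
    (hf : ∀ r ∈ Ioc 0 ε, HasDerivAt f (f' r) r) (hle : ∀ r ∈ Ioc 0 ε, C / r ≤ f' r) :
    Tendsto f (𝓝[>] 0) atBot := by
  have hmono : MonotoneOn (fun r => f r - C * log r) (Ioc 0 ε) := by
    have hderiv : ∀ r ∈ Ioc 0 ε, HasDerivAt (fun r => f r - C * log r) (f' r - C / r) r :=
      fun r hr =>
        ((hf r hr).fun_sub ((hasDerivAt_log hr.1.ne').const_mul C)).congr_deriv (by ring)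
    refine monotoneOn_of_hasDerivWithinAt_nonneg (convex_Ioc 0 ε)
      (fun r hr => (hderiv r hr).continuousAt.continuousWithinAt)
      (fun r hr => (hderiv r (interior_subset hr)).hasDerivWithinAt) fun r hr => ?_
    exact sub_nonneg.2 (hle r (interior_subset hr))
  have hbound : ∀ r ∈ Ioc 0 ε, f r ≤ (f ε - C * log ε) + C * log r := fun r hr => by
    have := hmono hr (right_mem_Ioc.2 hε) hr.2
    linarith
  exact tendsto_atBot_mono' _ (eventually_of_mem (Ioc_mem_nhdsGT hε) hbound)
    (tendsto_atBot_add_const_left _ _ (tendsto_log_nhdsGT_zero.const_mul_atBot hC))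

theorem tendsto_nhdsGT_zero_of_monotoneOn {f : ℝ → ℝ} (hmono : MonotoneOn f (Ioi 0))
    (hnonneg : ∀ r ∈ Ioi (0 : ℝ), 0 ≤ f r) (hbound : ∀ L > 0, ¬ ∀ r ∈ Ioi (0 : ℝ), L ≤ f r) :
    Tendsto f (𝓝[>] 0) (𝓝 0) := by
  have hbdd : BddBelow (f '' Ioi 0) := ⟨0, forall_mem_image.2 hnonneg⟩
  have hinf : 0 ≤ sInf (f '' Ioi 0) := le_csInf (nonempty_Ioi.image f) (forall_mem_image.2 hnonneg)
  obtain hzero | hpos := hinf.eq_or_lt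
  · simpa [← hzero] using hmono.tendsto_nhdsGT hbdd
  · exact absurd (fun r hr => csInf_le hbdd (mem_image_of_mem f hr)) (hbound _ hpos)

namespace StationaryMass

noncomputable def cellDensity (d : ℕ) (M : ℝ → ℝ) (r : ℝ) : ℝ := r * deriv M r + d * M r

variable {d : ℕ} {M W : ℝ → ℝ}

theorem hasDerivAt_pow_mul {r : ℝ} (hr : r ≠ 0) (hM : DifferentiableAt ℝ M r) :
    HasDerivAt (fun r => r ^ d * M r) (r ^ d * cellDensity d M r / r) r := by
  refine ((hasDerivAt_pow d r).fun_mul hM.hasDerivAt).congr_deriv ?_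
  rcases d with _ | d
  · simp [cellDensity, hr]
  · simp only [cellDensity, Nat.add_sub_cancel]
    field_simp
    push_cast
    ring

theorem hasDerivAt_cellDensity {r : ℝ} (hr : r ≠ 0) (hM : DifferentiableAt ℝ M r)
    (hM' : DifferentiableAt ℝ (deriv M) r)
    (hode : deriv (deriv M) r + ((d : ℝ) + 1) / r * deriv M r
      + r * deriv M r * W r + (d : ℝ) * M r * W r = 0) :
    HasDerivAt (cellDensity d M) (-(r * W r * cellDensity d M r)) r := by
  refine (((hasDerivAt_id r).fun_mul hM'.hasDerivAt).fun_add
    (hM.hasDerivAt.const_mul (d : ℝ))).congr_deriv ?_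
  rw [show deriv (deriv M) r = -(((d : ℝ) + 1) / r * deriv M r + r * deriv M r * W r
    + d * M r * W r) by linarith]
  simp only [cellDensity, id]
  field_simp
  ring

theorem hasDerivAt_pow_succ_mul_deriv {r : ℝ} (hr : r ≠ 0)
    (hW' : DifferentiableAt ℝ (deriv W) r)
    (hode : deriv (deriv W) r + ((d : ℝ) + 1) / r * deriv W r + M r = 0) :
    HasDerivAt (fun r => r ^ (d + 1) * deriv W r) (-(r ^ (d + 1) * M r)) r := by
  refine ((hasDerivAt_pow (d + 1) r).fun_mul hW'.hasDerivAt).congr_deriv ?_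
  rw [show deriv (deriv W) r = -(((d : ℝ) + 1) / r * deriv W r + M r) by linarith,
    Nat.add_sub_cancel]
  push_cast
  field_simp
  ring

theorem pow_succ_mul_deriv_le
    (hW' : ∀ r ∈ Ioi (0 : ℝ), DifferentiableAt ℝ (deriv W) r)
    (hode : ∀ r ∈ Ioi (0 : ℝ), deriv (deriv W) r + ((d : ℝ) + 1) / r * deriv W r + M r = 0)
    (hW'_nonpos : ∀ r ∈ Ioi (0 : ℝ), deriv W r ≤ 0) {L : ℝ}
    (hL : ∀ r ∈ Ioi (0 : ℝ), L ≤ r ^ d * M r) {s : ℝ} (hs : 0 < s) :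
    s ^ (d + 1) * deriv W s ≤ -(L / 2 * s ^ 2) := by
  have hanti : AntitoneOn (fun r => r ^ (d + 1) * deriv W r + L / 2 * r ^ 2) (Ioi 0) := by
    have hderiv : ∀ r ∈ Ioi (0 : ℝ), HasDerivAt (fun r => r ^ (d + 1) * deriv W r + L / 2 * r ^ 2)
        (-(r ^ (d + 1) * M r) + L * r) r := fun r hr =>
      ((hasDerivAt_pow_succ_mul_deriv hr.ne' (hW' r hr) (hode r hr)).fun_add
        ((hasDerivAt_pow 2 r).const_mul (L / 2))).congr_deriv (by push_cast; ring)
    refine antitoneOn_of_hasDerivWithinAt_nonpos (convex_Ioi 0)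
      (fun r hr => (hderiv r hr).continuousAt.continuousWithinAt)
      (fun r hr => (hderiv r (interior_subset hr)).hasDerivWithinAt) fun r hr => ?_
    rw [interior_Ioi] at hr
    have := mul_le_mul_of_nonneg_right (hL r hr) hr.le
    rw [pow_succ]
    nlinarith
  have hbound : ∀ r ∈ Ioc 0 s, s ^ (d + 1) * deriv W s + L / 2 * s ^ 2 ≤ L / 2 * r ^ 2 :=
    fun r hr => by
      have := hanti hr.1 hs hr.2
      have := mul_nonpos_of_nonneg_of_nonpos (pow_pos hr.1 (d + 1)).le (hW'_nonpos r hr.1)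
      linarith
  have hlim : Tendsto (fun r : ℝ => L / 2 * r ^ 2) (𝓝[>] 0) (𝓝 0) :=
    ((continuous_const.mul (continuous_pow 2)).tendsto' 0 0 (by simp)).mono_left
      nhdsWithin_le_nhds
  linarith [ge_of_tendsto hlim (eventually_of_mem (Ioc_mem_nhdsGT hs) hbound)]

theorem exists_div_pow_sub_le (hd : 3 ≤ d)
    (hW_diff : ∀ r ∈ Ioi (0 : ℝ), DifferentiableAt ℝ W r ∧ DifferentiableAt ℝ (deriv W) r)
    {L : ℝ} (hL : 0 < L) (hW' : ∀ r ∈ Ioi (0 : ℝ), r ^ (d + 1) * deriv W r ≤ -(L / 2 * r ^ 2))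
    {s : ℝ} (hs : 0 < s) (hWs : 0 ≤ W s) :
    ∃ c > 0, ∃ K ≥ 0, ∀ r ∈ Ioc 0 s, c / r ^ (d - 2) - K ≤ W r := by
  obtain ⟨n, rfl⟩ : ∃ n, d = n + 3 := ⟨d - 3, by omega⟩
  rw [show n + 3 - 2 = n + 1 from rfl]
  set c := L / 2 / ((n + 1 : ℕ) : ℝ)
  refine ⟨c, by positivity, c / s ^ (n + 1), by positivity, fun r hr => ?_⟩
  have hsub : uIcc r s ⊆ Ioi 0 := fun t ht => hr.1.trans_le (by simpa [hr.2] using ht.1)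
  have hW'_int : IntervalIntegrable (deriv W) volume r s :=
    ContinuousOn.intervalIntegrable fun t ht =>
      (hW_diff t (hsub ht)).2.continuousAt.continuousWithinAt
  have hint := sub_le_integral_of_div_pow_sub_le (f := fun t => -deriv W t) (a := L / 2) (b := 0)
    n.add_one_ne_zero hr.1 hr.2 hW'_int.neg fun t ht => by
      have ht0 : 0 < t := hr.1.trans_le ht.1
      have := hW' t ht0
      rw [zero_mul, sub_zero, div_le_iff₀ (pow_pos ht0 _)]
      rw [show t ^ (n + 3 + 1) = t ^ (n + 1 + 1) * t ^ 2 by ring] at this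
      exact le_of_mul_le_mul_right (by linarith) (pow_pos ht0 2)
  rw [intervalIntegral.integral_neg, intervalIntegral.integral_eq_sub_of_hasDerivAt
    (fun t ht => (hW_diff t (hsub ht)).1.hasDerivAt) hW'_int] at hint
  have : c / r ^ (n + 1) - c / s ^ (n + 1) ≤ W r - W s := by
    simpa [c, div_eq_mul_inv, mul_sub] using hint
  linarith

theorem tendsto_pow_mul_atBot
    (hM_diff : ∀ r ∈ Ioi (0 : ℝ), DifferentiableAt ℝ M r ∧ DifferentiableAt ℝ (deriv M) r)
    (hW : ContinuousOn W (Ioi 0))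
    (hode : ∀ r ∈ Ioi (0 : ℝ), deriv (deriv M) r + ((d : ℝ) + 1) / r * deriv M r
      + r * deriv M r * W r + (d : ℝ) * M r * W r = 0)
    {s : ℝ} (hs : 0 < s) (hu : 0 < cellDensity d M s) {c K : ℝ} {k : ℕ} (hc : 0 < c)
    (hK : 0 ≤ K) (hk : k ≠ 0) (hW_ge : ∀ t ∈ Ioc 0 s, c / t ^ (k + 2) - K ≤ W t) :
    Tendsto (fun r => r ^ d * M r) (𝓝[>] 0) atBot := by
  set u := cellDensity d M
  have hu_eq : ∀ r ∈ Ioc 0 s, u r = u s * exp (∫ t in r..s, t * W t) := fun r hr =>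
    eq_mul_exp_integral_of_hasDerivAt (continuousOn_id.mul hW)
      (fun r hr => hasDerivAt_cellDensity (ne_of_gt hr) (hM_diff r hr).1 (hM_diff r hr).2
        (hode r hr)) hr.1 hs
  set B := c / k / s ^ k + K * s ^ 2 / 2
  have hint : ∀ r ∈ Ioc 0 s, c / k / r ^ k - B ≤ ∫ t in r..s, t * W t := fun r hr => by
    have hsub : uIcc r s ⊆ Ioi 0 := fun t ht => hr.1.trans_le (by simpa [hr.2] using ht.1)
    have hI := sub_le_integral_of_div_pow_sub_le (f := fun t => t * W t) (a := c) (b := K) hk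
      hr.1 hr.2 ((continuousOn_id.mul hW).mono hsub).intervalIntegrable fun t ht => by
        have ht0 : 0 < t := hr.1.trans_le ht.1
        have := mul_le_mul_of_nonneg_left (hW_ge t ⟨ht0, ht.2⟩) ht0.le
        rw [mul_sub, pow_succ, ← div_div, mul_div_cancel₀ _ ht0.ne'] at this
        linarith
    calc c / k / r ^ k - B
        = c / k * ((r ^ k)⁻¹ - (s ^ k)⁻¹) - K * (s ^ 2 - r ^ 2) / 2 - K * r ^ 2 / 2 := by ring
      _ ≤ ∫ t in r..s, t * W t := by nlinarith [mul_nonneg hK (sq_nonneg r)]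
  set C := u s * exp (-B) * ((c / k) ^ d / d.factorial)
  have hC : 0 < C := by positivity
  have hu_ge : ∀ r ∈ Ioc 0 (min s 1), C / r ^ d ≤ u r := fun r hr => by
    have hrs : r ∈ Ioc 0 s := ⟨hr.1, hr.2.trans (min_le_left _ _)⟩
    calc C / r ^ d = u s * exp (-B) * ((c / k) ^ d / d.factorial / r ^ d) := by ring
      _ ≤ u s * exp (-B) * exp (c / k / r ^ k) := by
        gcongr
        exact div_pow_le_exp_div_pow (by positivity) hk d hr.1 (hr.2.trans (min_le_right _ _))
      _ = u s * exp (c / k / r ^ k - B) := by rw [sub_eq_add_neg, exp_add]; ring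
      _ ≤ u r := by
        rw [hu_eq r hrs]
        gcongr
        exact hint r hrs
  refine tendsto_atBot_of_div_le_deriv hC (lt_min hs one_pos)
    (fun r hr => hasDerivAt_pow_mul hr.1.ne' (hM_diff r hr.1).1) fun r hr => ?_
  have := hu_ge r hr
  rw [div_le_iff₀ (pow_pos hr.1 d)] at this
  exact div_le_div_of_nonneg_right (by linarith) hr.1.le

end StationaryMass

open StationaryMass

theorem stmt12_general (d : ℕ) (hd : 5 ≤ d) (M W : ℝ → ℝ)
    (hM_diff : ∀ r ∈ Set.Ioi (0 : ℝ),
      DifferentiableAt ℝ M r ∧ DifferentiableAt ℝ (deriv M) r)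
    (hW_diff : ∀ r ∈ Set.Ioi (0 : ℝ),
      DifferentiableAt ℝ W r ∧ DifferentiableAt ℝ (deriv W) r)
    (h_nonneg : ∀ r ∈ Set.Ioi (0 : ℝ), 0 ≤ M r ∧ 0 ≤ W r)
    (h_mono : ∀ r ∈ Set.Ioi (0 : ℝ), deriv M r ≤ 0 ∧ deriv W r ≤ 0)
    (hrdM_mono : MonotoneOn (fun r : ℝ => r ^ d * M r) (Set.Ioi 0))
    (hrdW_mono : MonotoneOn (fun r : ℝ => r ^ d * W r) (Set.Ioi 0))
    (h_pos : ∃ rs : ℝ, 0 < rs ∧ 0 < rs * deriv M rs + (d : ℝ) * M rs)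
    (hode1 : ∀ r ∈ Set.Ioi (0 : ℝ),
      deriv (deriv M) r + ((d : ℝ) + 1) / r * deriv M r
        + r * deriv M r * W r + (d : ℝ) * M r * W r = 0)
    (hode2 : ∀ r ∈ Set.Ioi (0 : ℝ),
      deriv (deriv W) r + ((d : ℝ) + 1) / r * deriv W r + M r = 0) :
    Filter.Tendsto (fun r : ℝ => r ^ d * M r) (nhdsWithin 0 (Set.Ioi 0)) (nhds 0) ∧
    Filter.Tendsto (fun r : ℝ => r ^ d * W r) (nhdsWithin 0 (Set.Ioi 0)) (nhds 0) := by
  obtain ⟨s, hs, hu⟩ := h_pos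
  have hW : ContinuousOn W (Ioi 0) := fun r hr =>
    (hW_diff r hr).1.continuousAt.continuousWithinAt
  have hM_not_atBot : ¬ Tendsto (fun r => r ^ d * M r) (𝓝[>] 0) atBot := fun h => by
    obtain ⟨r, hneg, hr⟩ := ((h.eventually_lt_atBot 0).and self_mem_nhdsWithin).exists
    exact hneg.not_ge (mul_nonneg (pow_pos hr d).le (h_nonneg r hr).1)
  refine ⟨tendsto_nhdsGT_zero_of_monotoneOn hrdM_mono
      (fun r hr => mul_nonneg (pow_pos hr d).le (h_nonneg r hr).1) fun L hL hLM => ?_,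
    tendsto_nhdsGT_zero_of_monotoneOn hrdW_mono
      (fun r hr => mul_nonneg (pow_pos hr d).le (h_nonneg r hr).2) fun L hL hLW => ?_⟩
  · obtain ⟨c, hc, K, hK, hW_ge⟩ := exists_div_pow_sub_le (by omega) hW_diff hL
      (fun r hr => pow_succ_mul_deriv_le (fun r hr => (hW_diff r hr).2) hode2
        (fun r hr => (h_mono r hr).2) hLM hr) hs (h_nonneg s hs).2
    refine hM_not_atBot (tendsto_pow_mul_atBot hM_diff hW hode1 hs hu hc hK (k := d - 4)
      (by omega) ?_)
    rwa [show d - 4 + 2 = d - 2 by omega]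
  · refine hM_not_atBot (tendsto_pow_mul_atBot hM_diff hW hode1 hs hu hL le_rfl (k := d - 2)
      (by omega) fun t ht => ?_)
    rw [show d - 2 + 2 = d by omega, sub_zero, div_le_iff₀ (pow_pos ht.1 d), mul_comm]
    exact hLW t ht.1

/-- For stationary mass functions `(M, W)` of the chemotaxis
system in dimension `d ≥ 5`, the quantities `r^d·M(r)` and `r^d·W(r)` vanish as
`r → 0⁺`. -/
theorem stmt12 (d : ℕ) (hd : 5 ≤ d) (M W : ℝ → ℝ)
    (hM_diff : ∀ r ∈ Set.Ioi (0 : ℝ),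
      DifferentiableAt ℝ M r ∧ DifferentiableAt ℝ (deriv M) r)
    (hM_cont : ContinuousOn (deriv (deriv M)) (Set.Ioi 0))
    (hW_diff : ∀ r ∈ Set.Ioi (0 : ℝ),
      DifferentiableAt ℝ W r ∧ DifferentiableAt ℝ (deriv W) r)
    (hW_cont : ContinuousOn (deriv (deriv W)) (Set.Ioi 0))
    (h_nonneg : ∀ r ∈ Set.Ioi (0 : ℝ), 0 ≤ M r ∧ 0 ≤ W r)
    (h_mono : ∀ r ∈ Set.Ioi (0 : ℝ), deriv M r ≤ 0 ∧ deriv W r ≤ 0)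
    (hrdM_mono : MonotoneOn (fun r : ℝ => r ^ d * M r) (Set.Ioi 0))
    (hrdW_mono : MonotoneOn (fun r : ℝ => r ^ d * W r) (Set.Ioi 0))
    (h_pos : ∃ rs : ℝ, 0 < rs ∧ 0 < rs * deriv M rs + (d : ℝ) * M rs)
    (hode1 : ∀ r ∈ Set.Ioi (0 : ℝ),
      deriv (deriv M) r + ((d : ℝ) + 1) / r * deriv M r
        + r * deriv M r * W r + (d : ℝ) * M r * W r = 0)
    (hode2 : ∀ r ∈ Set.Ioi (0 : ℝ),
      deriv (deriv W) r + ((d : ℝ) + 1) / r * deriv W r + M r = 0) :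
    Filter.Tendsto (fun r : ℝ => r ^ d * M r) (nhdsWithin 0 (Set.Ioi 0)) (nhds 0) ∧
    Filter.Tendsto (fun r : ℝ => r ^ d * W r) (nhdsWithin 0 (Set.Ioi 0)) (nhds 0) :=
  stmt12_general d hd M W hM_diff hW_diff h_nonneg h_mono hrdM_mono hrdW_mono h_pos hode1 hode2
end

section
/- (Reconstruction of a stationary solution from stationary mass functions.) Let d ≥ 5 be an integer. Let M, W : (0,∞) → ℝ be twice continuously differentiable with (r^d·M(r))' ≥ 0 and (r^d·W(r))' ≥ 0 on (0,∞), r^d·M(r) → 0 and r^d·W(r) → 0 as r → 0⁺, and satisfying for all r > 0: M''(r) + ((d+1)/r)·M'(r) + r·M'(r)·W(r) + d·M(r)·W(r) = 0 and W''(r) + ((d+1)/r)·W'(r) + M(r) = 0. Define u(r) := d·M(r) + r·M'(r), w(r) := d·W(r) + r·W'(r), and, for a fixed r₀ > 0 and constant c, v(r) := c − ∫_{r₀}^r ρ·W(ρ) dρ. Then u ≥ 0 and w ≥ 0 on (0,∞); for every r > 0 the improper integrals converge and M(r) = r^{−d}∫_0^r ρ^{d−1}u(ρ)dρ and W(r)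 = r^{−d}∫_0^r ρ^{d−1}w(ρ)dρ; and for all r > 0 the radial stationary system holds: u''(r) + ((d−1)/r)·u'(r) = r^{1−d}·(r^{d−1}·u(r)·v'(r))', v''(r) + ((d−1)/r)·v'(r) = −w(r), and w''(r) + ((d−1)/r)·w'(r) = −u(r). -/
/-!
Since `u = r^{1-d} (r^d M)'` and `w = r^{1-d} (r^d W)'`, the monotonicity hypotheses give
`u, w ≥ 0`, and the fundamental theorem of calculus on `(0, r)`, together with the limits at `0⁺`,
gives the integral representations; integrability is automatic because the integrands are
nonnegative derivatives. The mass equations are equivalent to the first-order relations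
`u' = -r W u` and `w' = -r M`, while `v' = -r W` by construction. Hence `u v' = u'`, so the
`u`-equation is `r^{1-d} (r^{d-1} g)' = g' + (d-1)/r · g` for `g = u'`; and `f' = -r F` gives
`f'' + (d-1)/r · f' = -(d F + r F')`, which is the `v`-equation for `F = W` and the `w`-equation
for `F = M`.
-/

open Set Filter Topology MeasureTheory

section FTC

variable {g g' : ℝ → ℝ} {a b ga : ℝ}

theorem integrableOn_Ioc_deriv_of_nonneg_of_tendsto
    (hderiv : ∀ x ∈ Ioc a b, HasDerivAt g (g' x) x) (hpos : ∀ x ∈ Ioo a b, 0 ≤ g' x)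
    (ha : Tendsto g (𝓝[>] a) (𝓝 ga)) : IntegrableOn g' (Ioc a b) := by
  classical
  have hcont : ContinuousOn (Function.update g a ga) (Icc a b) := by
    rw [continuousOn_update_iff, Icc_sdiff_left]
    exact ⟨fun x hx => (hderiv x hx).continuousAt.continuousWithinAt,
      fun _ => ha.mono_left (nhdsWithin_mono _ Ioc_subset_Ioi_self)⟩
  refine intervalIntegral.integrableOn_deriv_of_nonneg hcont (fun x hx => ?_) hpos
  refine (hderiv x (Ioo_subset_Ioc_self hx)).congr_of_eventuallyEq ?_
  filter_upwards [Ioi_mem_nhds hx.1] with y hy using Function.update_of_ne hy.ne' _ _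

theorem integrableOn_Ioo_and_integral_Ioo_deriv_of_nonneg_of_tendsto (hab : a < b)
    (hderiv : ∀ x ∈ Ioc a b, HasDerivAt g (g' x) x) (hpos : ∀ x ∈ Ioo a b, 0 ≤ g' x)
    (ha : Tendsto g (𝓝[>] a) (𝓝 ga)) :
    IntegrableOn g' (Ioo a b) ∧ ∫ x in Ioo a b, g' x = g b - ga := by
  have hint := integrableOn_Ioc_deriv_of_nonneg_of_tendsto hderiv hpos ha
  have hb : Tendsto g (𝓝[<] b) (𝓝 (g b)) :=
    (hderiv b ⟨hab, le_rfl⟩).continuousAt.tendsto.mono_left nhdsWithin_le_nhds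
  refine ⟨hint.mono_set Ioo_subset_Ioc_self, ?_⟩
  rw [← integral_Ioc_eq_integral_Ioo, ← intervalIntegral.integral_of_le hab.le]
  exact intervalIntegral.integral_eq_sub_of_hasDerivAt_of_tendsto hab
    (fun x hx => hderiv x (Ioo_subset_Ioc_self hx))
    ((intervalIntegrable_iff_integrableOn_Ioc_of_le hab.le).2 hint) ha hb

end FTC

theorem integrableOn_Ioo_and_eq_integral_div_pow {F f : ℝ → ℝ} {d : ℕ} {r : ℝ} (hr : 0 < r)
    (hderiv : ∀ x ∈ Ioi (0 : ℝ), HasDerivAt (fun s => s ^ d * F s) (x ^ (d - 1) * f x) x)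
    (hf : ∀ x ∈ Ioi (0 : ℝ), 0 ≤ f x) (hlim : Tendsto (fun s => s ^ d * F s) (𝓝[>] 0) (𝓝 0)) :
    IntegrableOn (fun x => x ^ (d - 1) * f x) (Ioo 0 r) ∧
      F r = (∫ x in Ioo 0 r, x ^ (d - 1) * f x) / r ^ d := by
  obtain ⟨hint, heq⟩ := integrableOn_Ioo_and_integral_Ioo_deriv_of_nonneg_of_tendsto hr
    (fun x hx => hderiv x hx.1) (fun x hx => mul_nonneg (pow_nonneg hx.1.le _) (hf x hx.1)) hlim
  refine ⟨hint, ?_⟩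
  rw [heq, sub_zero, mul_div_cancel_left₀ _ (pow_ne_zero d hr.ne')]

theorem hasDerivAt_integral_of_continuousOn_Ioi {f : ℝ → ℝ} {a b c : ℝ}
    (hf : ContinuousOn f (Ioi c)) (ha : c < a) (hb : c < b) :
    HasDerivAt (fun x => ∫ t in a..x, f t) (f b) b := by
  have hsub : uIcc a b ⊆ Ioi c := fun x hx => (lt_min ha hb).trans_le hx.1
  exact intervalIntegral.integral_hasDerivAt_right ((hf.mono hsub).intervalIntegrable)
    (hf.stronglyMeasurableAtFilter isOpen_Ioi b hb) (hf.continuousAt (Ioi_mem_nhds hb))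

theorem deriv_eventuallyEq_of_hasDerivAt_Ioi {f f' : ℝ → ℝ} {c r : ℝ}
    (hf : ∀ x ∈ Ioi c, HasDerivAt f (f' x) x) (hr : c < r) : deriv f =ᶠ[𝓝 r] f' :=
  eventually_of_mem (Ioi_mem_nhds hr) fun x hx => (hf x hx).deriv

theorem hasDerivAt_pow_mul {f : ℝ → ℝ} {f' x : ℝ} {d : ℕ} (hd : 1 ≤ d) (hf : HasDerivAt f f' x) :
    HasDerivAt (fun s => s ^ d * f s) (x ^ (d - 1) * (d * f x + x * f')) x := by
  refine ((hasDerivAt_pow d x).fun_mul hf).congr_deriv ?_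
  obtain ⟨k, rfl⟩ := Nat.exists_eq_add_of_le' hd
  rw [Nat.add_sub_cancel, pow_succ]
  push_cast
  ring

theorem hasDerivAt_const_mul_add_id_mul_deriv_of_eq {f : ℝ → ℝ} {x G : ℝ} (a : ℝ) (hx : x ≠ 0)
    (h₁ : DifferentiableAt ℝ f x) (h₂ : DifferentiableAt ℝ (deriv f) x)
    (hode : deriv (deriv f) x + (a + 1) / x * deriv f x + G = 0) :
    HasDerivAt (fun s => a * f s + s * deriv f s) (-(x * G)) x := by
  refine ((h₁.hasDerivAt.const_mul a).fun_add
    ((hasDerivAt_id' x).fun_mul h₂.hasDerivAt)).congr_deriv ?_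
  field_simp at hode
  linear_combination hode

theorem zpow_one_sub_mul_deriv_pow_mul {g : ℝ → ℝ} {r : ℝ} {d : ℕ} (hd : 1 ≤ d) (hr : r ≠ 0)
    (hg : DifferentiableAt ℝ g r) :
    r ^ ((1 : ℤ) - d) * deriv (fun s => s ^ (d - 1) * g s) r
      = deriv g r + ((d : ℝ) - 1) / r * g r := by
  obtain ⟨k, rfl⟩ := Nat.exists_eq_add_of_le' hd
  simp only [Nat.add_sub_cancel]
  rw [((hasDerivAt_pow k r).fun_mul hg.hasDerivAt).deriv]
  push_cast
  rw [show (1 : ℤ) - (k + 1) = -(k : ℤ) by ring, zpow_neg, zpow_natCast]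
  rcases k with _ | k
  · simp
  · push_cast
    simp only [pow_succ]
    field_simp
    ring

theorem deriv_deriv_add_div_mul_deriv_of_deriv_eventuallyEq {f F : ℝ → ℝ} {r F' : ℝ} (a : ℝ)
    (hr : r ≠ 0) (hf : deriv f =ᶠ[𝓝 r] fun s => -(s * F s)) (hF : HasDerivAt F F' r) :
    deriv (deriv f) r + (a - 1) / r * deriv f r = -(a * F r + r * F') := by
  rw [hf.deriv_eq, ((hasDerivAt_id' r).fun_mul hF).fun_neg.deriv, hf.eq_of_nhds]
  field_simp
  ring

theorem stmt13_general (d : ℕ) (hd : 5 ≤ d) (M W : ℝ → ℝ)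
    (hM_diff : ∀ r ∈ Set.Ioi (0 : ℝ),
      DifferentiableAt ℝ M r ∧ DifferentiableAt ℝ (deriv M) r)
    (hW_diff : ∀ r ∈ Set.Ioi (0 : ℝ),
      DifferentiableAt ℝ W r ∧ DifferentiableAt ℝ (deriv W) r)
    (hrdM_mono : ∀ r ∈ Set.Ioi (0 : ℝ), 0 ≤ deriv (fun s : ℝ => s ^ d * M s) r)
    (hrdW_mono : ∀ r ∈ Set.Ioi (0 : ℝ), 0 ≤ deriv (fun s : ℝ => s ^ d * W s) r)
    (hMlim : Filter.Tendsto (fun r : ℝ => r ^ d * M r) (nhdsWithin 0 (Set.Ioi 0)) (nhds 0))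
    (hWlim : Filter.Tendsto (fun r : ℝ => r ^ d * W r) (nhdsWithin 0 (Set.Ioi 0)) (nhds 0))
    (hode1 : ∀ r ∈ Set.Ioi (0 : ℝ),
      deriv (deriv M) r + ((d : ℝ) + 1) / r * deriv M r
        + r * deriv M r * W r + (d : ℝ) * M r * W r = 0)
    (hode2 : ∀ r ∈ Set.Ioi (0 : ℝ),
      deriv (deriv W) r + ((d : ℝ) + 1) / r * deriv W r + M r = 0)
    (r₀ : ℝ) (hr₀ : 0 < r₀) (c : ℝ) :
    let u : ℝ → ℝ := fun r => (d : ℝ) * M r + r * deriv M r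
    let w : ℝ → ℝ := fun r => (d : ℝ) * W r + r * deriv W r
    let v : ℝ → ℝ := fun r => c - ∫ ρ in r₀..r, ρ * W ρ
    (∀ r ∈ Set.Ioi (0 : ℝ), 0 ≤ u r ∧ 0 ≤ w r) ∧
    (∀ r ∈ Set.Ioi (0 : ℝ),
      MeasureTheory.IntegrableOn (fun ρ => ρ ^ (d - 1) * u ρ) (Set.Ioo 0 r) ∧
      MeasureTheory.IntegrableOn (fun ρ => ρ ^ (d - 1) * w ρ) (Set.Ioo 0 r) ∧
      M r = (∫ ρ in Set.Ioo (0 : ℝ) r, ρ ^ (d - 1) * u ρ) / r ^ d ∧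
      W r = (∫ ρ in Set.Ioo (0 : ℝ) r, ρ ^ (d - 1) * w ρ) / r ^ d) ∧
    (∀ r ∈ Set.Ioi (0 : ℝ),
      deriv (deriv u) r + ((d : ℝ) - 1) / r * deriv u r
          = r ^ ((1 : ℤ) - (d : ℤ)) * deriv (fun s => s ^ (d - 1) * u s * deriv v s) r ∧
      deriv (deriv v) r + ((d : ℝ) - 1) / r * deriv v r = -(w r) ∧
      deriv (deriv w) r + ((d : ℝ) - 1) / r * deriv w r = -(u r)) := by
  intro u w v
  have hd1 : 1 ≤ d := by omega
  have hM_mass : ∀ r ∈ Ioi (0 : ℝ), HasDerivAt (fun s => s ^ d * M s) (r ^ (d - 1) * u r) r :=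
    fun r hr => hasDerivAt_pow_mul hd1 (hM_diff r hr).1.hasDerivAt
  have hW_mass : ∀ r ∈ Ioi (0 : ℝ), HasDerivAt (fun s => s ^ d * W s) (r ^ (d - 1) * w r) r :=
    fun r hr => hasDerivAt_pow_mul hd1 (hW_diff r hr).1.hasDerivAt
  have hu_nonneg : ∀ r ∈ Ioi (0 : ℝ), 0 ≤ u r := fun r hr =>
    (mul_nonneg_iff_of_pos_left (pow_pos hr _)).1 ((hM_mass r hr).deriv ▸ hrdM_mono r hr)
  have hw_nonneg : ∀ r ∈ Ioi (0 : ℝ), 0 ≤ w r := fun r hr =>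
    (mul_nonneg_iff_of_pos_left (pow_pos hr _)).1 ((hW_mass r hr).deriv ▸ hrdW_mono r hr)
  have hu' : ∀ r ∈ Ioi (0 : ℝ), HasDerivAt u (-(r * (W r * u r))) r := fun r hr =>
    hasDerivAt_const_mul_add_id_mul_deriv_of_eq _ hr.out.ne' (hM_diff r hr).1 (hM_diff r hr).2
      (by linear_combination hode1 r hr)
  have hw' : ∀ r ∈ Ioi (0 : ℝ), HasDerivAt w (-(r * M r)) r := fun r hr =>
    hasDerivAt_const_mul_add_id_mul_deriv_of_eq _ hr.out.ne' (hW_diff r hr).1 (hW_diff r hr).2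
      (hode2 r hr)
  have hv' : ∀ r ∈ Ioi (0 : ℝ), HasDerivAt v (-(r * W r)) r := fun r hr =>
    ((hasDerivAt_const r c).sub (hasDerivAt_integral_of_continuousOn_Ioi
      (fun x hx => (continuousAt_id.mul (hW_diff x hx).1.continuousAt).continuousWithinAt)
      hr₀ hr)).congr_deriv (zero_sub _)
  refine ⟨fun r hr => ⟨hu_nonneg r hr, hw_nonneg r hr⟩, fun r hr => ?_, fun r hr => ⟨?_, ?_, ?_⟩⟩
  · obtain ⟨hintM, hM⟩ := integrableOn_Ioo_and_eq_integral_div_pow hr hM_mass hu_nonneg hMlim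
    obtain ⟨hintW, hW⟩ := integrableOn_Ioo_and_eq_integral_div_pow hr hW_mass hw_nonneg hWlim
    exact ⟨hintM, hintW, hM, hW⟩
  · have hflux : (fun s => s ^ (d - 1) * u s * deriv v s) =ᶠ[𝓝 r]
        fun s => s ^ (d - 1) * deriv u s := by
      filter_upwards [Ioi_mem_nhds hr] with s hs
      rw [(hv' s hs).deriv, (hu' s hs).deriv]
      ring
    have hu'_diff : DifferentiableAt ℝ (deriv u) r :=
      ((differentiableAt_id.mul ((hW_diff r hr).1.mul (hu' r hr).differentiableAt)).neg
        ).congr_of_eventuallyEq (deriv_eventuallyEq_of_hasDerivAt_Ioi hu' hr)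
    rw [hflux.deriv_eq, zpow_one_sub_mul_deriv_pow_mul hd1 hr.ne' hu'_diff]
  · exact deriv_deriv_add_div_mul_deriv_of_deriv_eventuallyEq _ hr.ne'
      (deriv_eventuallyEq_of_hasDerivAt_Ioi hv' hr) (hW_diff r hr).1.hasDerivAt
  · exact deriv_deriv_add_div_mul_deriv_of_deriv_eventuallyEq _ hr.ne'
      (deriv_eventuallyEq_of_hasDerivAt_Ioi hw' hr) (hM_diff r hr).1.hasDerivAt

/-- Reconstruction of a radial stationary solution `(u, v, w)` of the
chemotaxis system from stationary mass functions `(M, W)`. -/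
theorem stmt13 (d : ℕ) (hd : 5 ≤ d) (M W : ℝ → ℝ)
    (hM_diff : ∀ r ∈ Set.Ioi (0 : ℝ),
      DifferentiableAt ℝ M r ∧ DifferentiableAt ℝ (deriv M) r)
    (hM_cont : ContinuousOn (deriv (deriv M)) (Set.Ioi 0))
    (hW_diff : ∀ r ∈ Set.Ioi (0 : ℝ),
      DifferentiableAt ℝ W r ∧ DifferentiableAt ℝ (deriv W) r)
    (hW_cont : ContinuousOn (deriv (deriv W)) (Set.Ioi 0))
    (hrdM_mono : ∀ r ∈ Set.Ioi (0 : ℝ), 0 ≤ deriv (fun s : ℝ => s ^ d * M s) r)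
    (hrdW_mono : ∀ r ∈ Set.Ioi (0 : ℝ), 0 ≤ deriv (fun s : ℝ => s ^ d * W s) r)
    (hMlim : Filter.Tendsto (fun r : ℝ => r ^ d * M r) (nhdsWithin 0 (Set.Ioi 0)) (nhds 0))
    (hWlim : Filter.Tendsto (fun r : ℝ => r ^ d * W r) (nhdsWithin 0 (Set.Ioi 0)) (nhds 0))
    (hode1 : ∀ r ∈ Set.Ioi (0 : ℝ),
      deriv (deriv M) r + ((d : ℝ) + 1) / r * deriv M r
        + r * deriv M r * W r + (d : ℝ) * M r * W r = 0)
    (hode2 : ∀ r ∈ Set.Ioi (0 : ℝ),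
      deriv (deriv W) r + ((d : ℝ) + 1) / r * deriv W r + M r = 0)
    (r₀ : ℝ) (hr₀ : 0 < r₀) (c : ℝ) :
    let u : ℝ → ℝ := fun r => (d : ℝ) * M r + r * deriv M r
    let w : ℝ → ℝ := fun r => (d : ℝ) * W r + r * deriv W r
    let v : ℝ → ℝ := fun r => c - ∫ ρ in r₀..r, ρ * W ρ
    (∀ r ∈ Set.Ioi (0 : ℝ), 0 ≤ u r ∧ 0 ≤ w r) ∧
    (∀ r ∈ Set.Ioi (0 : ℝ),
      MeasureTheory.IntegrableOn (fun ρ => ρ ^ (d - 1) * u ρ) (Set.Ioo 0 r) ∧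
      MeasureTheory.IntegrableOn (fun ρ => ρ ^ (d - 1) * w ρ) (Set.Ioo 0 r) ∧
      M r = (∫ ρ in Set.Ioo (0 : ℝ) r, ρ ^ (d - 1) * u ρ) / r ^ d ∧
      W r = (∫ ρ in Set.Ioo (0 : ℝ) r, ρ ^ (d - 1) * w ρ) / r ^ d) ∧
    (∀ r ∈ Set.Ioi (0 : ℝ),
      deriv (deriv u) r + ((d : ℝ) - 1) / r * deriv u r
          = r ^ ((1 : ℤ) - (d : ℤ)) * deriv (fun s => s ^ (d - 1) * u s * deriv v s) r ∧
      deriv (deriv v) r + ((d : ℝ) - 1) / r * deriv v r = -(w r) ∧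
      deriv (deriv w) r + ((d : ℝ) - 1) / r * deriv w r = -(u r)) :=
  stmt13_general d hd M W hM_diff hW_diff hrdM_mono hrdW_mono hMlim hWlim hode1 hode2 r₀ hr₀ c
end

section
/- (Qualitative properties of the stationary chemical concentration.) Let d ≥ 5 be an integer. Let φ : [0,∞) → ℝ be continuously differentiable with φ'(0) = 0 and twice continuously differentiable on (0,∞), and let w : [0,∞) → ℝ be continuously differentiable with w'(0) = 0, w(0) > 0, twice continuously differentiable on (0,∞), such that for all r > 0: φ''(r) + ((d−1)/r)·φ'(r) = −w(r) and w''(r) + ((d−1)/r)·w'(r) = −e^{φ(r)}, and such that w(r) → 0 as r → ∞. Then w(r) > 0 for all r ≥ 0, w'(r) < 0 for all r > 0 (so w is strictly decreasing on (0,∞)), and φ'(r) < 0 for all r > 0 (so φ and e^{φ} are strictly decreasing on (0,∞)). -/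
/-!
Both equations have the form `(r^(d-1) g')' = -r^(d-1) h` with `g'(0) = 0`. For `w` the source
`h = e^φ` is positive, so `r^(d-1) w'` decreases strictly from `0` and `w' < 0`; a strictly
decreasing function tending to `0` is positive, so `w > 0`. This is now a positive source for `φ`,
and the same argument gives `φ' < 0`.
-/

open Set Filter Topology

theorem hasDerivAt_pow_mul_of_pos {g : ℝ → ℝ} (n : ℕ) {r : ℝ} (hr : 0 < r)
    (hg : DifferentiableAt ℝ g r) :
    HasDerivAt (fun s => s ^ n * g s) (r ^ n * (deriv g r + n / r * g r)) r := by
  refine ((hasDerivAt_pow n r).mul hg.hasDerivAt).congr_deriv ?_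
  rcases n with _ | n
  · simp
  · rw [Nat.add_sub_cancel]
    field_simp
    ring

theorem neg_of_deriv_add_div_mul_neg {g : ℝ → ℝ} (n : ℕ) (hgc : ContinuousOn g (Ici 0))
    (hg0 : g 0 = 0) (hgd : ∀ r ∈ Ioi (0 : ℝ), DifferentiableAt ℝ g r)
    (hlt : ∀ r ∈ Ioi (0 : ℝ), deriv g r + n / r * g r < 0) :
    ∀ r ∈ Ioi (0 : ℝ), g r < 0 := by
  have hanti : StrictAntiOn (fun s => s ^ n * g s) (Ici 0) := by
    refine strictAntiOn_of_deriv_neg (convex_Ici 0) ((continuous_pow n).continuousOn.mul hgc) ?_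
    intro r hr
    rw [interior_Ici] at hr
    rw [(hasDerivAt_pow_mul_of_pos n hr (hgd r hr)).deriv]
    exact mul_neg_of_pos_of_neg (pow_pos hr n) (hlt r hr)
  intro r hr
  have hmul : r ^ n * g r < 0 := by
    simpa [hg0] using hanti self_mem_Ici (mem_Ici.mpr hr.le) hr
  exact neg_of_mul_neg_right hmul (pow_nonneg hr.le n)

theorem pos_of_strictAntiOn_Ici_of_tendsto_zero {f : ℝ → ℝ} {a : ℝ}
    (hf : StrictAntiOn f (Ici a)) (hlim : Tendsto f atTop (𝓝 0)) :
    ∀ x ∈ Ici a, 0 < f x := by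
  intro x hx
  have hx1 : x + 1 ∈ Ici a := by simp only [mem_Ici] at hx ⊢; linarith
  have hnonneg : 0 ≤ f (x + 1) := by
    refine le_of_tendsto hlim ?_
    filter_upwards [eventually_ge_atTop (x + 1)] with s hs
    exact hf.antitoneOn hx1 (le_trans hx1 hs) hs
  linarith [hf hx hx1 (by linarith)]

theorem stmt15_general (d : ℕ) (hd : 5 ≤ d) (φ w : ℝ → ℝ)
    (hφ_contd : ContinuousOn (deriv φ) (Set.Ici 0))
    (hφ0 : deriv φ 0 = 0)
    (hφ2 : ∀ r ∈ Set.Ioi (0 : ℝ), DifferentiableAt ℝ (deriv φ) r)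
    (hw_diff : ∀ r ∈ Set.Ici (0 : ℝ), DifferentiableAt ℝ w r)
    (hw_contd : ContinuousOn (deriv w) (Set.Ici 0))
    (hw0 : deriv w 0 = 0)
    (hw2 : ∀ r ∈ Set.Ioi (0 : ℝ), DifferentiableAt ℝ (deriv w) r)
    (heq1 : ∀ r ∈ Set.Ioi (0 : ℝ),
      deriv (deriv φ) r + ((d : ℝ) - 1) / r * deriv φ r = -(w r))
    (heq2 : ∀ r ∈ Set.Ioi (0 : ℝ),
      deriv (deriv w) r + ((d : ℝ) - 1) / r * deriv w r = -Real.exp (φ r))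
    (hlim : Filter.Tendsto w Filter.atTop (nhds 0)) :
    (∀ r ∈ Set.Ici (0 : ℝ), 0 < w r) ∧
    (∀ r ∈ Set.Ioi (0 : ℝ), deriv w r < 0) ∧
    (∀ r ∈ Set.Ioi (0 : ℝ), deriv φ r < 0) := by
  have hcast : ((d - 1 : ℕ) : ℝ) = d - 1 := Nat.cast_pred (by omega)
  have hw' : ∀ r ∈ Ioi (0 : ℝ), deriv w r < 0 :=
    neg_of_deriv_add_div_mul_neg (d - 1) hw_contd hw0 hw2 fun r hr => by
      rw [hcast, heq2 r hr]
      exact neg_neg_of_pos (Real.exp_pos _)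
  have hw_anti : StrictAntiOn w (Ici 0) :=
    strictAntiOn_of_deriv_neg (convex_Ici 0)
      (fun r hr => (hw_diff r hr).continuousAt.continuousWithinAt)
      (by rwa [interior_Ici])
  have hw_pos := pos_of_strictAntiOn_Ici_of_tendsto_zero hw_anti hlim
  refine ⟨hw_pos, hw', ?_⟩
  exact neg_of_deriv_add_div_mul_neg (d - 1) hφ_contd hφ0 hφ2 fun r hr => by
    rw [hcast, heq1 r hr]
    exact neg_neg_of_pos (hw_pos r (mem_Ici.mpr hr.le))

/-- Qualitative properties of the stationary chemical concentration
attached to a radial entire solution of the biharmonic Gel'fand problem: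
`w > 0`, `w' < 0` and `φ' < 0`. -/
theorem stmt15 (d : ℕ) (hd : 5 ≤ d) (φ w : ℝ → ℝ)
    (hφ_diff : ∀ r ∈ Set.Ici (0 : ℝ), DifferentiableAt ℝ φ r)
    (hφ_contd : ContinuousOn (deriv φ) (Set.Ici 0))
    (hφ0 : deriv φ 0 = 0)
    (hφ2 : ∀ r ∈ Set.Ioi (0 : ℝ), DifferentiableAt ℝ (deriv φ) r)
    (hφ2c : ContinuousOn (deriv (deriv φ)) (Set.Ioi 0))
    (hw_diff : ∀ r ∈ Set.Ici (0 : ℝ), DifferentiableAt ℝ w r)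
    (hw_contd : ContinuousOn (deriv w) (Set.Ici 0))
    (hw0 : deriv w 0 = 0) (hwpos0 : 0 < w 0)
    (hw2 : ∀ r ∈ Set.Ioi (0 : ℝ), DifferentiableAt ℝ (deriv w) r)
    (hw2c : ContinuousOn (deriv (deriv w)) (Set.Ioi 0))
    (heq1 : ∀ r ∈ Set.Ioi (0 : ℝ),
      deriv (deriv φ) r + ((d : ℝ) - 1) / r * deriv φ r = -(w r))
    (heq2 : ∀ r ∈ Set.Ioi (0 : ℝ),
      deriv (deriv w) r + ((d : ℝ) - 1) / r * deriv w r = -Real.exp (φ r))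
    (hlim : Filter.Tendsto w Filter.atTop (nhds 0)) :
    (∀ r ∈ Set.Ici (0 : ℝ), 0 < w r) ∧
    (∀ r ∈ Set.Ioi (0 : ℝ), deriv w r < 0) ∧
    (∀ r ∈ Set.Ioi (0 : ℝ), deriv φ r < 0) :=
  stmt15_general d hd φ w hφ_contd hφ0 hφ2 hw_diff hw_contd hw0 hw2 heq1 heq2 hlim
end

section
/- (Scaled stationary solutions are sub/supersolutions.) Let d ≥ 1 be an integer and let u, v, w : ℝ^d → ℝ be twice differentiable functions satisfying, at every x ∈ ℝ^d: Δu(x) = div(u∇v)(x), Δv(x) = −w(x), Δw(x) = −u(x), together with u(x) > 0 and div(u∇v)(x) < 0 for all x. Then: (i) for every λ > 1, −Δ(λu)(x) + div((λu)·∇(λv))(x) ≤ 0 and −Δ(λw)(x) − λ·u(x) ≤ 0 for all x; (ii) for all λ₀ > λ₁ ≥ 1, −Δ(λ₀u)(x) + div((λ₀u)·∇(λ₁v))(x) ≤ 0 and −Δ(λ₁w)(x) − λ₀·u(x) ≤ 0 for all x; (iii) for every λ ∈ (0,1], −Δ(λu)(x) + div((λu)·∇(λv))(x) ≥ 0 and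 −Δ(λw)(x) − λ·u(x) ≥ 0 for all x. -/
/-! The Laplacian is linear and `div (u ∇v)` is bilinear in `(u, v)`, with no regularity needed
since `fderiv` commutes with scalar multiplication over a field. Hence, with
`D = div (u ∇v) = Δu < 0` and `Δw = -u`,

  `-Δ(λ₀ u) + div (λ₀ u ∇(λ₁ v)) = λ₀ (λ₁ - 1) D`  and  `-Δ(λ₁ w) - λ₀ u = (λ₁ - λ₀) u`,

whose signs are read off from `D < 0 < u`. -/

/-- The Laplacian of a real-valued function on `ℝ^d`, as the sum of second
partial derivatives along the standard coordinate directions. -/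
noncomputable def lap (d : ℕ) (f : EuclideanSpace ℝ (Fin d) → ℝ)
    (x : EuclideanSpace ℝ (Fin d)) : ℝ :=
  ∑ i : Fin d,
    fderiv ℝ (fun y => fderiv ℝ f y (EuclideanSpace.single i 1)) x (EuclideanSpace.single i 1)

/-- `div (u ∇v) = ⟨∇u, ∇v⟩ + u · Δv`. -/
noncomputable def divGrad (d : ℕ) (u v : EuclideanSpace ℝ (Fin d) → ℝ)
    (x : EuclideanSpace ℝ (Fin d)) : ℝ :=
  (inner ℝ (gradient u x) (gradient v x) : ℝ) + u x * lap d v x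

lemma fderiv_fun_const_mul_field {𝕜 E : Type*} [NontriviallyNormedField 𝕜]
    [NormedAddCommGroup E] [NormedSpace 𝕜 E] (l : 𝕜) (f : E → 𝕜) :
    fderiv 𝕜 (fun y => l * f y) = l • fderiv 𝕜 f :=
  fderiv_const_smul_field (f := f) l

section Scaling

variable {d : ℕ}

lemma lap_const_mul (l : ℝ) (f : EuclideanSpace ℝ (Fin d) → ℝ) (x : EuclideanSpace ℝ (Fin d)) :
    lap d (fun y => l * f y) x = l * lap d f x := by
  simp only [lap, fderiv_fun_const_mul_field, Pi.smul_apply, FunLike.coe_smul,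
    smul_eq_mul, Finset.mul_sum]

lemma gradient_const_mul (l : ℝ) (f : EuclideanSpace ℝ (Fin d) → ℝ)
    (x : EuclideanSpace ℝ (Fin d)) :
    gradient (fun y => l * f y) x = l • gradient f x := by
  simp only [gradient, fderiv_fun_const_mul_field, Pi.smul_apply, map_smul]

lemma divGrad_const_mul (l₀ l₁ : ℝ) (u v : EuclideanSpace ℝ (Fin d) → ℝ)
    (x : EuclideanSpace ℝ (Fin d)) :
    divGrad d (fun y => l₀ * u y) (fun y => l₁ * v y) x = l₀ * l₁ * divGrad d u v x := by
  simp only [divGrad, gradient_const_mul, lap_const_mul, real_inner_smul_left,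
    real_inner_smul_right]
  ring

lemma neg_lap_const_mul_add_divGrad_const_mul {u v : EuclideanSpace ℝ (Fin d) → ℝ}
    {x : EuclideanSpace ℝ (Fin d)} (h : lap d u x = divGrad d u v x) (l₀ l₁ : ℝ) :
    -(lap d (fun y => l₀ * u y) x) + divGrad d (fun y => l₀ * u y) (fun y => l₁ * v y) x
      = l₀ * (l₁ - 1) * divGrad d u v x := by
  rw [lap_const_mul, divGrad_const_mul, h]
  ring

lemma neg_lap_const_mul_sub_const_mul {u w : EuclideanSpace ℝ (Fin d) → ℝ}
    {x : EuclideanSpace ℝ (Fin d)} (h : lap d w x = -(u x)) (l₀ l₁ : ℝ) :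
    -(lap d (fun y => l₁ * w y) x) - l₀ * u x = (l₁ - l₀) * u x := by
  rw [lap_const_mul, h]
  ring

end Scaling

theorem stmt16_general (d : ℕ) (u v w : EuclideanSpace ℝ (Fin d) → ℝ)
    (heq1 : ∀ x, lap d u x = divGrad d u v x)
    (heq3 : ∀ x, lap d w x = -(u x))
    (hpos : ∀ x, 0 < u x)
    (hneg : ∀ x, divGrad d u v x < 0) :
    (∀ l : ℝ, 1 < l → ∀ x,
      (-(lap d (fun y => l * u y) x)
          + divGrad d (fun y => l * u y) (fun y => l * v y) x ≤ 0) ∧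
      (-(lap d (fun y => l * w y) x) - l * u x ≤ 0)) ∧
    (∀ l₀ l₁ : ℝ, 1 ≤ l₁ → l₁ < l₀ → ∀ x,
      (-(lap d (fun y => l₀ * u y) x)
          + divGrad d (fun y => l₀ * u y) (fun y => l₁ * v y) x ≤ 0) ∧
      (-(lap d (fun y => l₁ * w y) x) - l₀ * u x ≤ 0)) ∧
    (∀ l : ℝ, l ∈ Set.Ioc (0 : ℝ) 1 → ∀ x,
      (0 ≤ -(lap d (fun y => l * u y) x)
          + divGrad d (fun y => l * u y) (fun y => l * v y) x) ∧
      (0 ≤ -(lap d (fun y => l * w y) x) - l * u x)) := by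
  refine ⟨fun l hl x => ?_, fun l₀ l₁ hl₁ hl x => ?_, fun l ⟨hl0, hl1⟩ x => ?_⟩
  all_goals
    rw [neg_lap_const_mul_add_divGrad_const_mul (heq1 x), neg_lap_const_mul_sub_const_mul (heq3 x)]
    have hD := (hneg x).le
    have hu0 := (hpos x).le
  · exact ⟨mul_nonpos_of_nonneg_of_nonpos (by nlinarith) hD, by simp⟩
  · exact ⟨mul_nonpos_of_nonneg_of_nonpos (by nlinarith) hD,
      mul_nonpos_of_nonpos_of_nonneg (by linarith) hu0⟩
  · exact ⟨mul_nonneg_of_nonpos_of_nonpos (by nlinarith) hD, by simp⟩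

/-- Scaled stationary solutions of the chemotaxis system are
supersolutions (for `λ > 1`, or `λ₀ > λ₁ ≥ 1`) resp. subsolutions (for `0 < λ ≤ 1`)
of the stationary problem. -/
theorem stmt16 (d : ℕ) (hd : 1 ≤ d) (u v w : EuclideanSpace ℝ (Fin d) → ℝ)
    (hu : ContDiff ℝ 2 u) (hv : ContDiff ℝ 2 v) (hw : ContDiff ℝ 2 w)
    (heq1 : ∀ x, lap d u x = divGrad d u v x)
    (heq2 : ∀ x, lap d v x = -(w x))
    (heq3 : ∀ x, lap d w x = -(u x))
    (hpos : ∀ x, 0 < u x)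
    (hneg : ∀ x, divGrad d u v x < 0) :
    (∀ l : ℝ, 1 < l → ∀ x,
      (-(lap d (fun y => l * u y) x)
          + divGrad d (fun y => l * u y) (fun y => l * v y) x ≤ 0) ∧
      (-(lap d (fun y => l * w y) x) - l * u x ≤ 0)) ∧
    (∀ l₀ l₁ : ℝ, 1 ≤ l₁ → l₁ < l₀ → ∀ x,
      (-(lap d (fun y => l₀ * u y) x)
          + divGrad d (fun y => l₀ * u y) (fun y => l₁ * v y) x ≤ 0) ∧
      (-(lap d (fun y => l₁ * w y) x) - l₀ * u x ≤ 0)) ∧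
    (∀ l : ℝ, l ∈ Set.Ioc (0 : ℝ) 1 → ∀ x,
      (0 ≤ -(lap d (fun y => l * u y) x)
          + divGrad d (fun y => l * u y) (fun y => l * v y) x) ∧
      (0 ≤ -(lap d (fun y => l * w y) x) - l * u x)) :=
  stmt16_general d u v w heq1 heq3 hpos hneg
end

section
/- (Asymptotic upper bounds for radial stationary solutions with logarithmically bounded potential.) Let d ≥ 5 be an integer and r₀ ≥ 0. Let v, w : (r₀,∞) → ℝ be twice continuously differentiable and u : (r₀,∞) → ℝ continuous, with u(r) ≥ 0 and w(r) ≥ 0 for all r > r₀, and suppose for all r > r₀: v''(r) + ((d−1)/r)·v'(r) = −w(r) and w''(r) + ((d−1)/r)·w'(r) = −u(r). If liminf_{r→∞} (v(r) + 4·log r) > −∞, then liminf_{r→∞} r⁴·u(r) ≤ 8(d−4)(d−2) and liminf_{r→∞} r²·w(r) ≤ 4(d−2). -/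
/-!
With `n = d - 1` the radial operator is `f'' + (n/r) f' = r⁻ⁿ (rⁿ f')'`, so a lower bound
`g ≥ c r^(-q)` on the right-hand side of `f'' + (n/r) f' = -g` integrates once to
`f' ≤ B r⁻ⁿ - c/(n+1-q) r^(1-q)`.

If `r² w ≥ a > 4(d-2)` eventually, this gives `v' ≤ B r⁻ⁿ - m/r` with `m > 4`, so
`v + 4 log r → -∞`, which the liminf hypothesis excludes; hence `liminf r² w ≤ 4(d-2)`.
If `r⁴ u ≥ c > 8(d-4)(d-2)` eventually, it gives `w' ≤ B r⁻ⁿ - c/(d-4) r⁻³`, and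
integrating from `r` to `∞` with `w ≥ 0` gives `r² w ≥ c/(2(d-4)) - o(1)`, where
`c/(2(d-4)) > 4(d-2)`: excluded again.
-/

open Filter Set Real Topology

theorem sub_le_sub_of_hasDerivAt_le {f g f' g' : ℝ → ℝ} {R : ℝ}
    (hf : ∀ x ∈ Ici R, HasDerivAt f (f' x) x) (hg : ∀ x ∈ Ici R, HasDerivAt g (g' x) x)
    (hfg : ∀ x ∈ Ici R, f' x ≤ g' x) {x y : ℝ} (hx : R ≤ x) (hxy : x ≤ y) :
    f y - f x ≤ g y - g x := by
  have hanti : AntitoneOn (fun t => f t - g t) (Ici R) :=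
    antitoneOn_of_hasDerivWithinAt_nonpos (convex_Ici R)
      (fun t ht => ((hf t ht).sub (hg t ht)).continuousAt.continuousWithinAt)
      (fun t ht => ((hf t (interior_subset ht)).sub (hg t (interior_subset ht))).hasDerivWithinAt)
      (fun t ht => sub_nonpos.2 (hfg t (interior_subset ht)))
  have := hanti (mem_Ici.2 hx) (mem_Ici.2 (hx.trans hxy)) hxy
  linarith

theorem le_of_hasDerivAt_le_of_tendsto_zero {f g f' g' : ℝ → ℝ} {R : ℝ}
    (hf : ∀ x ∈ Ici R, HasDerivAt f (f' x) x) (hg : ∀ x ∈ Ici R, HasDerivAt g (g' x) x)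
    (hfg : ∀ x ∈ Ici R, f' x ≤ g' x) (hg0 : Tendsto g atTop (𝓝 0))
    (hf0 : ∀ x ∈ Ici R, 0 ≤ f x) : ∀ x ∈ Ici R, g x ≤ f x := by
  intro x hx
  refine ge_of_tendsto (by simpa using tendsto_const_nhds.add hg0) ?_
  filter_upwards [eventually_ge_atTop x] with y hy
  have := sub_le_sub_of_hasDerivAt_le hf hg hfg hx hy
  linarith [hf0 y (hx.trans hy)]

theorem hasDerivAt_rpow_mul_deriv {f : ℝ → ℝ} {n x : ℝ} (hx : 0 < x)
    (hf : DifferentiableAt ℝ (deriv f) x) :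
    HasDerivAt (fun r => r ^ n * deriv f r)
      (x ^ n * (deriv (deriv f) x + n / x * deriv f x)) x := by
  refine ((hasDerivAt_rpow_const (p := n) (Or.inl hx.ne')).mul hf.hasDerivAt).congr_deriv ?_
  rw [rpow_sub_one hx.ne']
  ring

theorem exists_deriv_le_of_le_rpow_mul {f g : ℝ → ℝ} {n q c R : ℝ} (hR : 0 < R)
    (hq : q ≠ n + 1) (hf : ∀ x ∈ Ici R, DifferentiableAt ℝ (deriv f) x)
    (hfg : ∀ x ∈ Ici R, deriv (deriv f) x + n / x * deriv f x = -g x)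
    (hg : ∀ x ∈ Ici R, c ≤ x ^ q * g x) :
    ∃ B, ∀ x ∈ Ici R, deriv f x ≤ B * x ^ (-n) - c / (n + 1 - q) * x ^ (1 - q) := by
  set p := n + 1 - q
  have hp : p ≠ 0 := sub_ne_zero.2 hq.symm
  have hpos : ∀ x ∈ Ici R, 0 < x := fun x hx => hR.trans_le hx
  have hflux := fun x hx => hasDerivAt_rpow_mul_deriv (n := n) (hpos x hx) (hf x hx)
  have hG : ∀ x ∈ Ici R,
      HasDerivAt (fun r => -(c / p) * r ^ p) (-(c / p) * (p * x ^ (p - 1))) x :=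
    fun x hx => (hasDerivAt_rpow_const (Or.inl (hpos x hx).ne')).const_mul _
  have hflux_le : ∀ x ∈ Ici R,
      x ^ n * (deriv (deriv f) x + n / x * deriv f x) ≤ -(c / p) * (p * x ^ (p - 1)) := by
    intro x hx
    have hx0 := hpos x hx
    have hsplit : x ^ n = x ^ (p - 1) * x ^ q := by rw [← rpow_add hx0]; congr 1; ring
    rw [hfg x hx, hsplit, show -(c / p) * (p * x ^ (p - 1)) = -(c * x ^ (p - 1)) by field_simp]
    nlinarith [hg x hx, rpow_pos_of_pos hx0 (p - 1)]
  refine ⟨R ^ n * deriv f R + c / p * R ^ p, fun x hx => ?_⟩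
  have hx0 := hpos x hx
  have hcmp := sub_le_sub_of_hasDerivAt_le hflux hG hflux_le le_rfl hx
  have hinv : x ^ (-n) * x ^ n = 1 := by rw [← rpow_add hx0, neg_add_cancel, rpow_zero]
  have hshift : x ^ (-n) * x ^ p = x ^ (1 - q) := by rw [← rpow_add hx0]; congr 1; ring
  calc deriv f x = x ^ (-n) * (x ^ n * deriv f x) := by rw [← mul_assoc, hinv, one_mul]
    _ ≤ x ^ (-n) * (R ^ n * deriv f R + c / p * R ^ p - c / p * x ^ p) :=
        mul_le_mul_of_nonneg_left (by linarith) (rpow_nonneg hx0.le _)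
    _ = _ := by linear_combination (-(c / p)) * hshift

theorem tendsto_rpow_one_sub_atTop_nhds_zero {n : ℝ} (hn : 1 < n) :
    Tendsto (fun x : ℝ => x ^ (1 - n)) atTop (𝓝 0) := by
  simpa only [neg_sub] using tendsto_rpow_neg_atTop (sub_pos.2 hn)

theorem tendsto_add_mul_log_atBot_of_deriv_le {f : ℝ → ℝ} {n m p B R : ℝ} (hR : 0 < R)
    (hn : 1 < n) (hpm : p < m) (hf : ∀ x ∈ Ici R, DifferentiableAt ℝ f x)
    (hf' : ∀ x ∈ Ici R, deriv f x ≤ B * x ^ (-n) - m * x⁻¹) :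
    Tendsto (fun x => f x + p * log x) atTop atBot := by
  have hpos : ∀ x ∈ Ici R, 0 < x := fun x hx => hR.trans_le hx
  have hG : ∀ x ∈ Ici R, HasDerivAt (fun r => B / (1 - n) * r ^ (1 - n) - m * log r)
      (B * x ^ (-n) - m * x⁻¹) x := by
    intro x hx
    refine (((hasDerivAt_rpow_const (p := 1 - n) (Or.inl (hpos x hx).ne')).const_mul _).sub
      ((hasDerivAt_log (hpos x hx).ne').const_mul m)).congr_deriv ?_
    rw [show 1 - n - 1 = -n by ring]
    field_simp [(sub_neg.2 hn).ne]
  obtain ⟨C, hbound⟩ : ∃ C, ∀ x ∈ Ici R,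
      f x + p * log x ≤ C + B / (1 - n) * x ^ (1 - n) + -((m - p) * log x) := by
    refine ⟨f R - (B / (1 - n) * R ^ (1 - n) - m * log R), fun x hx => ?_⟩
    have := sub_le_sub_of_hasDerivAt_le (fun t ht => (hf t ht).hasDerivAt) hG hf' le_rfl hx
    linarith
  refine tendsto_atBot_mono' _ (eventually_atTop.2 ⟨R, hbound⟩)
    (Tendsto.add_atBot (C := C) ?_ ?_)
  · simpa using tendsto_const_nhds.add ((tendsto_rpow_one_sub_atTop_nhds_zero hn).const_mul _)
  · exact tendsto_neg_atTop_atBot.comp (tendsto_log_atTop.const_mul_atTop (sub_pos.2 hpm))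

theorem eventually_le_sq_mul_of_deriv_le {f : ℝ → ℝ} {n a b B R : ℝ} (hR : 0 < R)
    (hn : 3 < n) (hab : a < b / 2) (hf : ∀ x ∈ Ici R, DifferentiableAt ℝ f x)
    (hf0 : ∀ x ∈ Ici R, 0 ≤ f x)
    (hf' : ∀ x ∈ Ici R, deriv f x ≤ B * x ^ (-n) - b * x ^ (-3 : ℝ)) :
    ∀ᶠ x in atTop, a ≤ x ^ 2 * f x := by
  have hpos : ∀ x ∈ Ici R, 0 < x := fun x hx => hR.trans_le hx
  set G : ℝ → ℝ := fun r => b / 2 * r ^ (-2 : ℝ) + B / (1 - n) * r ^ (1 - n) with hG_def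
  have hG : ∀ x ∈ Ici R, HasDerivAt G (B * x ^ (-n) - b * x ^ (-3 : ℝ)) x := by
    intro x hx
    refine (((hasDerivAt_rpow_const (p := -2) (Or.inl (hpos x hx).ne')).const_mul _).add
      ((hasDerivAt_rpow_const (p := 1 - n) (Or.inl (hpos x hx).ne')).const_mul _)).congr_deriv ?_
    rw [show (-2 : ℝ) - 1 = -3 by norm_num, show 1 - n - 1 = -n by ring]
    field_simp [(sub_neg.2 (by linarith : 1 < n)).ne]
    ring
  have hG0 : Tendsto G atTop (𝓝 0) := by
    simpa [hG_def] using ((tendsto_rpow_neg_atTop two_pos).const_mul (b / 2)).add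
      ((tendsto_rpow_one_sub_atTop_nhds_zero (by linarith : 1 < n)).const_mul (B / (1 - n)))
  have hlow := le_of_hasDerivAt_le_of_tendsto_zero (fun x hx => (hf x hx).hasDerivAt) hG hf' hG0 hf0
  have hlim :
      Tendsto (fun x : ℝ => b / 2 + B / (1 - n) * x ^ (1 - (n - 2))) atTop (𝓝 (b / 2)) := by
    simpa using tendsto_const_nhds.add
      ((tendsto_rpow_one_sub_atTop_nhds_zero (by linarith : 1 < n - 2)).const_mul (B / (1 - n)))
  filter_upwards [hlim.eventually (eventually_gt_nhds hab), eventually_ge_atTop R] with x hax hx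
  have hx0 := hpos x hx
  have h2 : x ^ 2 * x ^ (-2 : ℝ) = 1 := by
    rw [← rpow_two, ← rpow_add hx0, add_neg_cancel, rpow_zero]
  have h3 : x ^ 2 * x ^ (1 - n) = x ^ (1 - (n - 2)) := by
    rw [← rpow_two, ← rpow_add hx0]; congr 1; ring
  calc a ≤ b / 2 + B / (1 - n) * x ^ (1 - (n - 2)) := hax.le
    _ = x ^ 2 * G x := by linear_combination (-(b / 2)) * h2 - B / (1 - n) * h3
    _ ≤ x ^ 2 * f x := mul_le_mul_of_nonneg_left (hlow x hx) (sq_nonneg x)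

theorem tendsto_add_mul_log_atBot_of_le_sq_mul {v w : ℝ → ℝ} {n a p : ℝ} (hn : 1 < n)
    (hpa : p * (n - 1) < a)
    (hv : ∀ᶠ x in atTop, DifferentiableAt ℝ v x ∧ DifferentiableAt ℝ (deriv v) x)
    (hvw : ∀ᶠ x in atTop, deriv (deriv v) x + n / x * deriv v x = -w x)
    (hw : ∀ᶠ x in atTop, a ≤ x ^ 2 * w x) :
    Tendsto (fun x => v x + p * log x) atTop atBot := by
  obtain ⟨R, hR⟩ := eventually_atTop.1 ((eventually_gt_atTop 0).and (hv.and (hvw.and hw)))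
  choose hpos hdiff hode hbound using hR
  obtain ⟨B, hB⟩ := exists_deriv_le_of_le_rpow_mul (q := 2) (hpos R le_rfl) (by linarith)
    (fun x hx => (hdiff x hx).2) hode
    (fun x hx => by rw [rpow_two]; exact hbound x hx)
  refine tendsto_add_mul_log_atBot_of_deriv_le (m := a / (n - 1)) (B := B) (hpos R le_rfl) hn
    ((lt_div_iff₀ (sub_pos.2 hn)).2 hpa) (fun x hx => (hdiff x hx).1) (fun x hx => ?_)
  have := hB x hx
  rwa [show n + 1 - 2 = n - 1 by ring, show (1 : ℝ) - 2 = -1 by norm_num, rpow_neg_one] at this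

theorem eventually_le_sq_mul_of_le_pow_four_mul {u w : ℝ → ℝ} {n a c : ℝ} (hn : 3 < n)
    (hac : a < c / (2 * (n - 3)))
    (hw : ∀ᶠ x in atTop, DifferentiableAt ℝ w x ∧ DifferentiableAt ℝ (deriv w) x)
    (hw0 : ∀ᶠ x in atTop, 0 ≤ w x)
    (hwu : ∀ᶠ x in atTop, deriv (deriv w) x + n / x * deriv w x = -u x)
    (hu : ∀ᶠ x in atTop, c ≤ x ^ 4 * u x) :
    ∀ᶠ x in atTop, a ≤ x ^ 2 * w x := by
  obtain ⟨R, hR⟩ :=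
    eventually_atTop.1 ((eventually_gt_atTop 0).and (hw.and (hw0.and (hwu.and hu))))
  choose hpos hdiff hnonneg hode hbound using hR
  obtain ⟨B, hB⟩ := exists_deriv_le_of_le_rpow_mul (q := 4) (hpos R le_rfl) (by linarith)
    (fun x hx => (hdiff x hx).2) hode
    (fun x hx => by rw [rpow_ofNat]; exact hbound x hx)
  refine eventually_le_sq_mul_of_deriv_le (b := c / (n - 3)) (B := B) (hpos R le_rfl) hn
    (by rwa [div_div, mul_comm]) (fun x hx => (hdiff x hx).1) hnonneg (fun x hx => ?_)
  have := hB x hx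
  rwa [show n + 1 - 4 = n - 3 by ring, show (1 : ℝ) - 4 = -3 by norm_num] at this

theorem exists_lt_eventually_lt_of_coe_lt_liminf {α : Type*} {l : Filter α} {f : α → ℝ}
    {b : ℝ}
    (h : (b : EReal) < liminf (fun x => (f x : EReal)) l) :
    ∃ a : ℝ, b < a ∧ ∀ᶠ x in l, a < f x := by
  obtain ⟨a, hba, ha⟩ := EReal.exists_between_coe_real h
  exact ⟨a, EReal.coe_lt_coe_iff.1 hba,
    (eventually_lt_of_lt_liminf ha).mono fun x hx => EReal.coe_lt_coe_iff.1 hx⟩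

theorem stmt17_general (d : ℕ) (hd : 5 ≤ d) (r₀ : ℝ) (u v w : ℝ → ℝ)
    (hv_diff : ∀ r ∈ Set.Ioi r₀, DifferentiableAt ℝ v r ∧ DifferentiableAt ℝ (deriv v) r)
    (hw_diff : ∀ r ∈ Set.Ioi r₀, DifferentiableAt ℝ w r ∧ DifferentiableAt ℝ (deriv w) r)
    (h_nonneg : ∀ r ∈ Set.Ioi r₀, 0 ≤ u r ∧ 0 ≤ w r)
    (heq1 : ∀ r ∈ Set.Ioi r₀,
      deriv (deriv v) r + ((d : ℝ) - 1) / r * deriv v r = -(w r))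
    (heq2 : ∀ r ∈ Set.Ioi r₀,
      deriv (deriv w) r + ((d : ℝ) - 1) / r * deriv w r = -(u r))
    (hliminf : (⊥ : EReal) <
      Filter.liminf (fun r : ℝ => ((v r + 4 * Real.log r : ℝ) : EReal)) Filter.atTop) :
    Filter.liminf (fun r : ℝ => ((r ^ 4 * u r : ℝ) : EReal)) Filter.atTop
        ≤ ((8 * ((d : ℝ) - 4) * ((d : ℝ) - 2) : ℝ) : EReal) ∧
    Filter.liminf (fun r : ℝ => ((r ^ 2 * w r : ℝ) : EReal)) Filter.atTop
        ≤ ((4 * ((d : ℝ) - 2) : ℝ) : EReal) := by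
  set n : ℝ := (d : ℝ) - 1 with hn_def
  have hn : 3 < n := by
    have : (5 : ℝ) ≤ d := by exact_mod_cast hd
    linarith
  have ev : ∀ {P : ℝ → Prop}, (∀ r ∈ Ioi r₀, P r) → ∀ᶠ r in atTop, P r :=
    fun h => (eventually_gt_atTop r₀).mono h
  have no_sq_lower_bound : ∀ a, 4 * (n - 1) < a → ¬ ∀ᶠ r in atTop, a ≤ r ^ 2 * w r :=
    fun a ha hw => hliminf.ne' (EReal.tendsto_coe_nhds_bot_iff.2
      (tendsto_add_mul_log_atBot_of_le_sq_mul (by linarith) ha (ev hv_diff) (ev heq1) hw)).liminf_eq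
  constructor
  · by_contra h
    obtain ⟨c, hc, hcu⟩ := exists_lt_eventually_lt_of_coe_lt_liminf (not_le.1 h)
    obtain ⟨a, ha, hac⟩ : ∃ a, 4 * (n - 1) < a ∧ a < c / (2 * (n - 3)) :=
      exists_between ((lt_div_iff₀ (by linarith)).2 (by rw [hn_def]; linarith))
    exact no_sq_lower_bound a ha (eventually_le_sq_mul_of_le_pow_four_mul hn hac (ev hw_diff)
      (ev fun r hr => (h_nonneg r hr).2) (ev heq2) (hcu.mono fun r h => h.le))
  · by_contra h
    obtain ⟨a, ha, haw⟩ := exists_lt_eventually_lt_of_coe_lt_liminf (not_le.1 h)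
    exact no_sq_lower_bound a (by rw [hn_def]; linarith) (haw.mono fun r h => h.le)

/-- Asymptotic upper bounds for radial stationary solutions whose
potential satisfies `liminf (v(r) + 4 log r) > −∞`:
`liminf r⁴u(r) ≤ 8(d−4)(d−2)` and `liminf r²w(r) ≤ 4(d−2)`. -/
theorem stmt17 (d : ℕ) (hd : 5 ≤ d) (r₀ : ℝ) (hr₀ : 0 ≤ r₀) (u v w : ℝ → ℝ)
    (hv_diff : ∀ r ∈ Set.Ioi r₀, DifferentiableAt ℝ v r ∧ DifferentiableAt ℝ (deriv v) r)
    (hv_cont : ContinuousOn (deriv (deriv v)) (Set.Ioi r₀))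
    (hw_diff : ∀ r ∈ Set.Ioi r₀, DifferentiableAt ℝ w r ∧ DifferentiableAt ℝ (deriv w) r)
    (hw_cont : ContinuousOn (deriv (deriv w)) (Set.Ioi r₀))
    (hu_cont : ContinuousOn u (Set.Ioi r₀))
    (h_nonneg : ∀ r ∈ Set.Ioi r₀, 0 ≤ u r ∧ 0 ≤ w r)
    (heq1 : ∀ r ∈ Set.Ioi r₀,
      deriv (deriv v) r + ((d : ℝ) - 1) / r * deriv v r = -(w r))
    (heq2 : ∀ r ∈ Set.Ioi r₀,
      deriv (deriv w) r + ((d : ℝ) - 1) / r * deriv w r = -(u r))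
    (hliminf : (⊥ : EReal) <
      Filter.liminf (fun r : ℝ => ((v r + 4 * Real.log r : ℝ) : EReal)) Filter.atTop) :
    Filter.liminf (fun r : ℝ => ((r ^ 4 * u r : ℝ) : EReal)) Filter.atTop
        ≤ ((8 * ((d : ℝ) - 4) * ((d : ℝ) - 2) : ℝ) : EReal) ∧
    Filter.liminf (fun r : ℝ => ((r ^ 2 * w r : ℝ) : EReal)) Filter.atTop
        ≤ ((4 * ((d : ℝ) - 2) : ℝ) : EReal) :=
  stmt17_general d hd r₀ u v w hv_diff hw_diff h_nonneg heq1 heq2 hliminf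
end

section
/- (Critical Morrey values of the regular stationary profile in high dimensions.) Let d ≥ 5 be an integer and let φ : [0,∞) → ℝ be continuously differentiable with φ'(0) = 0 and twice continuously differentiable on (0,∞), and write Δφ(r) := φ''(r) + ((d−1)/r)·φ'(r). Assume: (a) φ(r) + 4·log r < log(8(d−4)(d−2)) for all r > 0; (b) φ(r) + 4·log r → log(8(d−4)(d−2)) as r → ∞; (c) −Δφ(r) < 4(d−2)/r² for all r > 0; (d) r²·Δφ(r) → −4(d−2) as r → ∞. Then sup_{R>0} R^{4−d}·∫_0^R r^{d−1}·e^{φ(r)} dr = 8(d−2) and sup_{R>0} R^{2−d}·∫_0^R r^{d−1}·(−Δφ(r)) dr = 4. -/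
/-- The radial Laplacian `Δf(r) = f''(r) + ((d−1)/r) f'(r)`. -/
noncomputable def lapR (d : ℕ) (f : ℝ → ℝ) (r : ℝ) : ℝ :=
  deriv (deriv f) r + ((d : ℝ) - 1) / r * deriv f r

/-!
Both integrands are of the form `r ^ k * g r` with `g ≤ c` on `(0, ∞)` and `g r → c` as `r → ∞`:
`g = r⁴ e^φ = exp (φ + 4 log r)` with `c = 8(d-4)(d-2)`, `k = d - 5`, and `g = -r² Δφ` with
`c = 4(d-2)`, `k = d - 3`. For such a profile `R^{-(k+1)} ∫₀ᴿ r^k g ≤ c/(k+1)`, and the bound is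
approached as `R → ∞`, so the supremum is `c/(k+1)`, i.e. `8(d-2)` and `4`.

The one delicate point is that `r^{d-1} Δφ` is integrable near `0` although `φ''` is only
continuous on `(0, ∞)`: it is the derivative of the continuous function `r^{d-1} φ'`, and it is
bounded below by the derivative `-4(d-2) r^{d-3}` of a polynomial, so their difference is a
nonnegative derivative, which is always integrable.
-/

open MeasureTheory Filter Set Topology

lemma rpow_neg_natCast_add_one {R : ℝ} (hR : 0 < R) (k : ℕ) :
    R ^ (-((k : ℝ) + 1)) = (R ^ (k + 1))⁻¹ := by
  rw [Real.rpow_neg hR.le, ← Nat.cast_add_one, Real.rpow_natCast]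

section PowerWeight

variable {k : ℕ} {c : ℝ} {g : ℝ → ℝ}

lemma integral_pow_mul_le {R : ℝ} (hR : 0 ≤ R)
    (hint : IntervalIntegrable (fun r => r ^ k * g r) volume 0 R) (hg : ∀ r > 0, g r ≤ c) :
    ∫ r in (0 : ℝ)..R, r ^ k * g r ≤ c * R ^ (k + 1) / (k + 1) :=
  calc ∫ r in (0 : ℝ)..R, r ^ k * g r ≤ ∫ r in (0 : ℝ)..R, r ^ k * c :=
        intervalIntegral.integral_mono_on_of_le_Ioo hR hint
          (((continuous_pow k).mul continuous_const).intervalIntegrable _ _) fun r hr =>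
          mul_le_mul_of_nonneg_left (hg r hr.1) (pow_nonneg hr.1.le k)
    _ = c * R ^ (k + 1) / (k + 1) := by
      rw [intervalIntegral.integral_mul_const, integral_pow]; ring

lemma le_integral_pow_mul {M R c' : ℝ} (hM : 0 ≤ M) (hMR : M ≤ R)
    (hintM : IntervalIntegrable (fun r => r ^ k * g r) volume 0 M)
    (hintR : IntervalIntegrable (fun r => r ^ k * g r) volume 0 R) (hg : ∀ r ≥ M, c' ≤ g r) :
    (∫ r in (0 : ℝ)..M, r ^ k * g r) + c' * (R ^ (k + 1) - M ^ (k + 1)) / (k + 1) ≤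
      ∫ r in (0 : ℝ)..R, r ^ k * g r := by
  have hintMR := hintM.symm.trans hintR
  rw [← intervalIntegral.integral_add_adjacent_intervals hintM hintMR]
  gcongr
  calc c' * (R ^ (k + 1) - M ^ (k + 1)) / (k + 1) = ∫ r in M..R, r ^ k * c' := by
        rw [intervalIntegral.integral_mul_const, integral_pow]; ring
    _ ≤ ∫ r in M..R, r ^ k * g r :=
        intervalIntegral.integral_mono_on_of_le_Ioo hMR
          (((continuous_pow k).mul continuous_const).intervalIntegrable _ _) hintMR fun r hr =>
          mul_le_mul_of_nonneg_left (hg r hr.1.le) (pow_nonneg (hM.trans hr.1.le) k)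

lemma eventually_lt_rpow_mul_integral_pow_mul
    (hint : ∀ R > 0, IntervalIntegrable (fun r => r ^ k * g r) volume 0 R)
    (hg : ∀ c' < c, ∀ᶠ r in atTop, c' ≤ g r) {w : ℝ} (hw : w < c / (k + 1)) :
    ∀ᶠ R in atTop, w < R ^ (-((k : ℝ) + 1)) * ∫ r in (0 : ℝ)..R, r ^ k * g r := by
  have hk : (0 : ℝ) < k + 1 := by positivity
  obtain ⟨c', hwc', hc'⟩ := exists_between ((lt_div_iff₀ hk).1 hw)
  obtain ⟨M, hM⟩ := ((hg c' hc').and (eventually_gt_atTop 0)).exists_forall_of_atTop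
  have hM0 : 0 < M := (hM M le_rfl).2
  set B := (∫ r in (0 : ℝ)..M, r ^ k * g r) - c' * M ^ (k + 1) / (k + 1) with hB
  have hlim : Tendsto (fun R : ℝ => c' / (k + 1) + B / R ^ (k + 1)) atTop (𝓝 (c' / (k + 1))) := by
    simpa only [add_zero] using tendsto_const_nhds.add ((tendsto_const_nhds (x := B)).div_atTop
      (tendsto_pow_atTop (α := ℝ) (Nat.succ_ne_zero k)))
  filter_upwards [hlim.eventually (eventually_gt_nhds ((lt_div_iff₀ hk).2 hwc')),
    eventually_ge_atTop M] with R hwR hMR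
  have hR : 0 < R := hM0.trans_le hMR
  rw [rpow_neg_natCast_add_one hR, inv_mul_eq_div, lt_div_iff₀ (by positivity)]
  calc w * R ^ (k + 1) < (c' / (k + 1) + B / R ^ (k + 1)) * R ^ (k + 1) := by gcongr
    _ = (∫ r in (0 : ℝ)..M, r ^ k * g r) + c' * (R ^ (k + 1) - M ^ (k + 1)) / (k + 1) := by
      rw [hB]; field_simp; ring
    _ ≤ _ := le_integral_pow_mul hM0.le hMR (hint M hM0) (hint R hR) fun r hr => (hM r hr).1

theorem sSup_rpow_mul_integral_pow_mul
    (hint : ∀ R > 0, IntervalIntegrable (fun r => r ^ k * g r) volume 0 R)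
    (hg : ∀ r > 0, g r ≤ c) (hlim : Tendsto g atTop (𝓝 c)) :
    sSup ((fun R : ℝ => R ^ (-((k : ℝ) + 1)) * ∫ r in (0 : ℝ)..R, r ^ k * g r) '' Ioi 0) =
      c / (k + 1) := by
  refine csSup_eq_of_forall_le_of_forall_lt_exists_gt (nonempty_Ioi.image _) ?_ fun w hw => ?_
  · rintro _ ⟨R, hR, rfl⟩
    dsimp only
    rw [rpow_neg_natCast_add_one hR, inv_mul_le_iff₀ (pow_pos hR _)]
    calc _ ≤ c * R ^ (k + 1) / (k + 1) := integral_pow_mul_le hR.le (hint R hR) hg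
      _ = R ^ (k + 1) * (c / (k + 1)) := by ring
  · obtain ⟨R, hwR, hR⟩ := ((eventually_lt_rpow_mul_integral_pow_mul hint
      (fun c' hc' => hlim.eventually (eventually_ge_nhds hc')) hw).and
      (eventually_gt_atTop 0)).exists
    exact ⟨_, ⟨R, hR, rfl⟩, hwR⟩

end PowerWeight

lemma intervalIntegrable_deriv_of_deriv_le {F U f u : ℝ → ℝ} {a b : ℝ} (hab : a ≤ b)
    (hF : ContinuousOn F (Icc a b)) (hU : ContinuousOn U (Icc a b))
    (hFf : ∀ x ∈ Ioo a b, HasDerivAt F (f x) x) (hUu : ∀ x ∈ Ioo a b, HasDerivAt U (u x) x)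
    (hu : IntervalIntegrable u volume a b) (huf : ∀ x ∈ Ioo a b, u x ≤ f x) :
    IntervalIntegrable f volume a b := by
  have hfu : IntegrableOn (f - u) (Ioc a b) :=
    intervalIntegral.integrableOn_deriv_of_nonneg (hF.sub hU)
      (fun x hx => (hFf x hx).sub (hUu x hx)) fun x hx => sub_nonneg.2 (huf x hx)
  simpa only [Pi.sub_apply, sub_add_cancel] using
    ((intervalIntegrable_iff_integrableOn_Ioc_of_le hab).2 hfu).add hu

lemma hasDerivAt_pow_mul_deriv {d : ℕ} (hd : 1 ≤ d) {f : ℝ → ℝ} {r : ℝ} (hr : r ≠ 0)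
    (hf : DifferentiableAt ℝ (deriv f) r) :
    HasDerivAt (fun s => s ^ (d - 1) * deriv f s) (r ^ (d - 1) * lapR d f r) r := by
  refine ((hasDerivAt_pow (d - 1) r).mul hf.hasDerivAt).congr_deriv ?_
  obtain ⟨m, rfl⟩ := Nat.exists_eq_add_of_le' hd
  simp only [lapR, Nat.add_sub_cancel, Nat.cast_add, Nat.cast_one, add_sub_cancel_right]
  rcases m with _ | m
  · simp
  · simp only [Nat.add_sub_cancel, pow_succ]
    field_simp
    ring

lemma intervalIntegrable_pow_mul_lapR {d : ℕ} (hd : 3 ≤ d) {φ : ℝ → ℝ}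
    (hφ' : ContinuousOn (deriv φ) (Ici 0)) (hφ'' : ∀ r > 0, DifferentiableAt ℝ (deriv φ) r)
    {C : ℝ} (hC : ∀ r > 0, -(lapR d φ r) ≤ C / r ^ 2) {R : ℝ} (hR : 0 ≤ R) :
    IntervalIntegrable (fun r => r ^ (d - 1) * lapR d φ r) volume 0 R := by
  obtain ⟨m, rfl⟩ := Nat.exists_eq_add_of_le' hd
  refine intervalIntegrable_deriv_of_deriv_le (F := fun s => s ^ (m + 3 - 1) * deriv φ s)
    (U := fun s => -(C / (m + 1)) * s ^ (m + 1)) (u := fun s => -(C * s ^ m)) hR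
    ((continuousOn_pow _).mul (hφ'.mono Icc_subset_Ici_self)) (by fun_prop)
    (fun x hx => hasDerivAt_pow_mul_deriv (by omega) hx.1.ne' (hφ'' x hx.1)) (fun x hx => ?_)
    ((by fun_prop : Continuous fun s : ℝ => -(C * s ^ m)).intervalIntegrable _ _) fun x hx => ?_
  · refine ((hasDerivAt_pow (m + 1) x).const_mul (-(C / (m + 1)))).congr_deriv ?_
    simp only [Nat.add_sub_cancel]
    push_cast
    field_simp
  · have hx0 := hx.1
    have h := mul_le_mul_of_nonneg_left ((le_div_iff₀ (by positivity)).1 (hC x hx0))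
      (pow_nonneg hx0.le m)
    have e : x ^ (m + 3 - 1) * lapR (m + 3) φ x = -(x ^ m * (-lapR (m + 3) φ x * x ^ 2)) := by
      rw [show m + 3 - 1 = m + 2 by omega]; ring
    rw [e]
    linarith

theorem sSup_rpow_mul_integral_pow_mul_exp {d : ℕ} (hd : 5 ≤ d) {φ : ℝ → ℝ}
    (hφ : ContinuousOn φ (Ici 0)) {C : ℝ} (hC : 0 < C)
    (hle : ∀ r > 0, φ r + 4 * Real.log r ≤ Real.log C)
    (hlim : Tendsto (fun r => φ r + 4 * Real.log r) atTop (𝓝 (Real.log C))) :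
    sSup ((fun R : ℝ => R ^ ((4 : ℝ) - d) * ∫ r in (0 : ℝ)..R, r ^ (d - 1) * Real.exp (φ r)) ''
      Ioi 0) = C / (d - 4) := by
  obtain ⟨m, rfl⟩ := Nat.exists_eq_add_of_le' hd
  have hexp : ∀ r > 0, Real.exp (φ r + 4 * Real.log r) = r ^ 4 * Real.exp (φ r) := fun r hr => by
    rw [Real.exp_add, show (4 : ℝ) * Real.log r = ((4 : ℕ) : ℝ) * Real.log r by norm_num,
      ← Real.log_pow, Real.exp_log (by positivity), mul_comm]
  have key := sSup_rpow_mul_integral_pow_mul (k := m) (c := C)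
    (g := fun r => r ^ 4 * Real.exp (φ r))
    (fun R hR => (((continuousOn_pow m).mul ((continuousOn_pow 4).mul
      (Real.continuous_exp.comp_continuousOn hφ))).mono
        Icc_subset_Ici_self).intervalIntegrable_of_Icc hR.le)
    (fun r hr => by rw [← hexp r hr, ← Real.exp_log hC]; exact Real.exp_le_exp.2 (hle r hr))
    (by
      rw [← Real.exp_log hC]
      exact ((Real.continuous_exp.tendsto _).comp hlim).congr'
        ((eventually_gt_atTop 0).mono fun r hr => hexp r hr))
  convert key using 4 with R
  · congr 1; push_cast; ring
  · refine intervalIntegral.integral_congr fun r _ => ?_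
    simp only [show m + 5 - 1 = m + 4 from rfl, pow_add]
    ring
  · push_cast; ring

theorem sSup_rpow_mul_integral_pow_mul_neg_lapR {d : ℕ} (hd : 3 ≤ d) {φ : ℝ → ℝ}
    (hφ' : ContinuousOn (deriv φ) (Ici 0)) (hφ'' : ∀ r > 0, DifferentiableAt ℝ (deriv φ) r)
    {C : ℝ} (hle : ∀ r > 0, -(lapR d φ r) ≤ C / r ^ 2)
    (hlim : Tendsto (fun r => r ^ 2 * lapR d φ r) atTop (𝓝 (-C))) :
    sSup ((fun R : ℝ => R ^ ((2 : ℝ) - d) * ∫ r in (0 : ℝ)..R, r ^ (d - 1) * -(lapR d φ r)) ''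
      Ioi 0) = C / (d - 2) := by
  have hsplit : ∀ r : ℝ, r ^ (d - 1) * -(lapR d φ r) = r ^ (d - 3) * (r ^ 2 * -(lapR d φ r)) :=
    fun r => by rw [← mul_assoc, ← pow_add, show d - 3 + 2 = d - 1 by omega]
  have key := sSup_rpow_mul_integral_pow_mul (k := d - 3) (c := C)
    (g := fun r => r ^ 2 * -(lapR d φ r))
    (fun R hR => by
      convert (intervalIntegrable_pow_mul_lapR hd hφ' hφ'' hle hR.le).neg using 1
      ext r
      rw [Pi.neg_apply, ← mul_neg, hsplit])
    (fun r hr => by rw [mul_comm]; exact (le_div_iff₀ (by positivity)).1 (hle r hr))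
    (by simpa only [mul_neg, neg_neg] using hlim.neg)
  convert key using 4 with R
  · congr 1; rw [Nat.cast_sub hd]; push_cast; ring
  · exact intervalIntegral.integral_congr fun r _ => hsplit r
  · rw [Nat.cast_sub hd]; push_cast; ring

theorem stmt18_general (d : ℕ) (hd : 5 ≤ d) (φ : ℝ → ℝ)
    (hφ_diff : ∀ r ∈ Set.Ici (0 : ℝ), DifferentiableAt ℝ φ r)
    (hφ_contd : ContinuousOn (deriv φ) (Set.Ici 0))
    (hφ2 : ∀ r ∈ Set.Ioi (0 : ℝ), DifferentiableAt ℝ (deriv φ) r)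
    (ha : ∀ r ∈ Set.Ioi (0 : ℝ),
      φ r + 4 * Real.log r < Real.log (8 * ((d : ℝ) - 4) * ((d : ℝ) - 2)))
    (hb : Filter.Tendsto (fun r => φ r + 4 * Real.log r) Filter.atTop
      (nhds (Real.log (8 * ((d : ℝ) - 4) * ((d : ℝ) - 2)))))
    (hc : ∀ r ∈ Set.Ioi (0 : ℝ), -(lapR d φ r) < 4 * ((d : ℝ) - 2) / r ^ 2)
    (hd' : Filter.Tendsto (fun r => r ^ 2 * lapR d φ r) Filter.atTop
      (nhds (-(4 * ((d : ℝ) - 2))))) :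
    sSup ((fun R : ℝ =>
        R ^ ((4 : ℝ) - (d : ℝ)) * ∫ r in (0 : ℝ)..R, r ^ (d - 1) * Real.exp (φ r)) ''
      Set.Ioi 0) = 8 * ((d : ℝ) - 2) ∧
    sSup ((fun R : ℝ =>
        R ^ ((2 : ℝ) - (d : ℝ)) * ∫ r in (0 : ℝ)..R, r ^ (d - 1) * (-(lapR d φ r))) ''
      Set.Ioi 0) = 4 := by
  have hd5 : (5 : ℝ) ≤ d := by exact_mod_cast hd
  have hd4 : (d : ℝ) - 4 ≠ 0 := by linarith
  have hd2 : (d : ℝ) - 2 ≠ 0 := by linarith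
  constructor
  · rw [sSup_rpow_mul_integral_pow_mul_exp hd
      (fun r hr => (hφ_diff r hr).continuousAt.continuousWithinAt) (by nlinarith)
      (fun r hr => (ha r hr).le) hb]
    field_simp
  · rw [sSup_rpow_mul_integral_pow_mul_neg_lapR (by omega) hφ_contd hφ2
      (fun r hr => (hc r hr).le) hd']
    field_simp

/-- Critical Morrey values of the regular stationary profile
`(e^φ, −Δφ)` in high dimensions: under the pointwise bounds and the asymptotics of
`φ` by the singular solution, the Morrey suprema equal `8(d−2)` and `4`. -/
theorem stmt18 (d : ℕ) (hd : 5 ≤ d) (φ : ℝ → ℝ)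
    (hφ_diff : ∀ r ∈ Set.Ici (0 : ℝ), DifferentiableAt ℝ φ r)
    (hφ_contd : ContinuousOn (deriv φ) (Set.Ici 0))
    (hφ0 : deriv φ 0 = 0)
    (hφ2 : ∀ r ∈ Set.Ioi (0 : ℝ), DifferentiableAt ℝ (deriv φ) r)
    (hφ2c : ContinuousOn (deriv (deriv φ)) (Set.Ioi 0))
    (ha : ∀ r ∈ Set.Ioi (0 : ℝ),
      φ r + 4 * Real.log r < Real.log (8 * ((d : ℝ) - 4) * ((d : ℝ) - 2)))
    (hb : Filter.Tendsto (fun r => φ r + 4 * Real.log r) Filter.atTop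
      (nhds (Real.log (8 * ((d : ℝ) - 4) * ((d : ℝ) - 2)))))
    (hc : ∀ r ∈ Set.Ioi (0 : ℝ), -(lapR d φ r) < 4 * ((d : ℝ) - 2) / r ^ 2)
    (hd' : Filter.Tendsto (fun r => r ^ 2 * lapR d φ r) Filter.atTop
      (nhds (-(4 * ((d : ℝ) - 2))))) :
    sSup ((fun R : ℝ =>
        R ^ ((4 : ℝ) - (d : ℝ)) * ∫ r in (0 : ℝ)..R, r ^ (d - 1) * Real.exp (φ r)) ''
      Set.Ioi 0) = 8 * ((d : ℝ) - 2) ∧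
    sSup ((fun R : ℝ =>
        R ^ ((2 : ℝ) - (d : ℝ)) * ∫ r in (0 : ℝ)..R, r ^ (d - 1) * (-(lapR d φ r))) ''
      Set.Ioi 0) = 4 :=
  stmt18_general d hd φ hφ_diff hφ_contd hφ2 ha hb hc hd'
end

section
/- (Supercritical Morrey value of the oscillating stationary profile in intermediate dimensions.) Let d be an integer with 5 ≤ d ≤ 12 and set τ := −(d−4)/2. Let φ : [0,∞) → ℝ be continuous and suppose there exist real numbers C₀ ≠ 0, k₀ ≠ 0, k₁, C₁, ν < 2−d, R₁ ≥ 1 and C' > 0 such that for all r ≥ R₁: |φ(r) + 4·log r − log(8(d−4)(d−2)) − C₀·r^{τ}·sin(k₀·log r + k₁) − C₁·r^{ν}| ≤ C'·r^{2τ}. Then lim_{R→∞} R^{4−d}·∫_0^R r^{d−1}·e^{φ(r)} dr = 8(d−2), the quantity R^{4−d}·∫_0^R r^{d−1}·e^{φ(r)} dr exceeds 8(d−2) for arbitrarily large R, and consequently sup_{R>0} R^{4−d}·∫_0^R r^{d−1}·e^{φ(r)} dr is finite and strictly greater than 8(d−2). -/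
/-!
Put `α = (d - 4) / 2`, `A = 8 (d - 4) (d - 2)` and `ψ = φ + 4 log r - log A`, so that
`r ^ (d - 1) e ^ φ = A r ^ (2α - 1) e ^ ψ` and `ψ = C₀ r ^ (-α) sin (k₀ log r + k₁) + O(r ^ (-2α))`.
Expanding `e ^ ψ = 1 + ψ + O(ψ ^ 2)`, the integrand is
`A r ^ (2α - 1) + A C₀ r ^ (α - 1) sin (k₀ log r + k₁) + O(1 / r)`, and the middle term has the
explicit primitive `G(R) = R ^ α (α sin - k₀ cos) (k₀ log R + k₁) / (α ^ 2 + k₀ ^ 2)`. Hence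
`∫₀ᴿ = A R ^ (2α) / (2α) + A C₀ G(R) + O(log R)`. After multiplying by `R ^ (-2α)` this gives the
limit `A / (2α) = 8 (d - 2)` with error `O(R ^ (-α))`. Along the radii where `k₀ log R + k₁` is a
well-chosen angle modulo `2π`, `A C₀ G(R)` is a positive multiple of `R ^ α`, which beats `log R`,
so the quantity exceeds its limit there. Near `R = 0` it is bounded because `e ^ φ` is bounded on
compact sets.
-/

open Real Filter Asymptotics MeasureTheory Set intervalIntegral Topology

noncomputable def sinLogPrimitive (α k₀ k₁ r : ℝ) : ℝ :=
  r ^ α * (α * sin (k₀ * log r + k₁) - k₀ * cos (k₀ * log r + k₁)) / (α ^ 2 + k₀ ^ 2)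

theorem hasDerivAt_sinLogPrimitive {α k₀ : ℝ} (k₁ : ℝ) (hαk : α ^ 2 + k₀ ^ 2 ≠ 0) {r : ℝ}
    (hr : 0 < r) :
    HasDerivAt (sinLogPrimitive α k₀ k₁) (r ^ (α - 1) * sin (k₀ * log r + k₁)) r := by
  have hθ : HasDerivAt (fun x => k₀ * log x + k₁) (k₀ * r⁻¹) r :=
    ((hasDerivAt_log hr.ne').const_mul k₀).add_const k₁
  have h := ((hasDerivAt_rpow_const (p := α) (Or.inl hr.ne')).mul
    ((((hasDerivAt_sin _).comp r hθ).const_mul α).sub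
      (((hasDerivAt_cos _).comp r hθ).const_mul k₀))).div_const (α ^ 2 + k₀ ^ 2)
  refine h.congr_deriv ?_
  simp only [Pi.sub_apply, Function.comp_apply]
  rw [rpow_sub_one hr.ne']
  field_simp
  ring

theorem continuousOn_rpow_mul_sin_log (β k₀ k₁ : ℝ) :
    ContinuousOn (fun r => r ^ β * sin (k₀ * log r + k₁)) (Ioi 0) := fun x hx =>
  (by fun_prop (disch := simp [(mem_Ioi.1 hx).ne']) :
    ContinuousAt (fun r => r ^ β * sin (k₀ * log r + k₁)) x).continuousWithinAt

theorem integral_rpow_mul_sin_log {α k₀ : ℝ} (k₁ : ℝ) (hαk : α ^ 2 + k₀ ^ 2 ≠ 0) {a b : ℝ}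
    (ha : 0 < a) (hb : 0 < b) :
    ∫ r in a..b, r ^ (α - 1) * sin (k₀ * log r + k₁) =
      sinLogPrimitive α k₀ k₁ b - sinLogPrimitive α k₀ k₁ a := by
  have hpos : uIcc a b ⊆ Ioi 0 := fun x hx => (lt_min ha hb).trans_le hx.1
  exact integral_eq_sub_of_hasDerivAt (fun x hx => hasDerivAt_sinLogPrimitive k₁ hαk (hpos hx))
    ((continuousOn_rpow_mul_sin_log _ k₀ k₁).mono hpos).intervalIntegrable

theorem isBigO_sinLogPrimitive (α k₀ k₁ : ℝ) :
    sinLogPrimitive α k₀ k₁ =O[atTop] fun r => r ^ α := by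
  refine IsBigO.of_bound ((|α| + |k₀|) / (α ^ 2 + k₀ ^ 2)) (Eventually.of_forall fun r => ?_)
  rw [sinLogPrimitive, mul_div_assoc, norm_mul, mul_comm, norm_div,
    norm_of_nonneg (by positivity : (0 : ℝ) ≤ α ^ 2 + k₀ ^ 2)]
  gcongr
  calc ‖α * sin (k₀ * log r + k₁) - k₀ * cos (k₀ * log r + k₁)‖
      ≤ |α| * |sin (k₀ * log r + k₁)| + |k₀| * |cos (k₀ * log r + k₁)| := by
        rw [Real.norm_eq_abs, ← abs_mul, ← abs_mul]; exact abs_sub _ _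
    _ ≤ |α| * 1 + |k₀| * 1 := by gcongr <;> [exact abs_sin_le_one _; exact abs_cos_le_one _]
    _ = |α| + |k₀| := by ring

theorem frequently_sin_cos_log_eq {k₀ : ℝ} (hk₀ : k₀ ≠ 0) (k₁ θ : ℝ) :
    ∃ᶠ R in atTop, sin (k₀ * log R + k₁) = sin θ ∧ cos (k₀ * log R + k₁) = cos θ := by
  -- `k₀ * t n + k₁ = θ ± 2πn`, with the sign of `k₀`
  set t : ℕ → ℝ := fun n => (θ - k₁) / k₀ + n * (2 * π) / |k₀|
  have ht : Tendsto t atTop atTop :=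
    tendsto_atTop_add_const_left _ _ <|
      (tendsto_natCast_atTop_atTop.atTop_mul_const (by positivity)).atTop_div_const
        (abs_pos.2 hk₀)
  refine (tendsto_exp_atTop.comp ht).frequently (Frequently.of_forall fun n => ?_)
  simp only [Function.comp, log_exp, t]
  rcases abs_choice k₀ with h | h <;> rw [h]
  · have : k₀ * ((θ - k₁) / k₀ + n * (2 * π) / k₀) + k₁ = θ + n * (2 * π) := by
      field_simp; ring
    rw [this, sin_add_nat_mul_two_pi, cos_add_nat_mul_two_pi]
    exact ⟨rfl, rfl⟩
  · have : k₀ * ((θ - k₁) / k₀ + n * (2 * π) / -k₀) + k₁ = θ - n * (2 * π) := by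
      field_simp; ring
    rw [this, sin_sub_nat_mul_two_pi, cos_sub_nat_mul_two_pi]
    exact ⟨rfl, rfl⟩

theorem exists_frequently_mul_sinLogPrimitive_eq {B k₀ : ℝ} (hB : B ≠ 0) (hk₀ : k₀ ≠ 0)
    (α k₁ : ℝ) : ∃ c > 0, ∃ᶠ R in atTop, B * sinLogPrimitive α k₀ k₁ R = c * R ^ α := by
  obtain ⟨θ, hθ⟩ : ∃ θ, 0 < B * (α * sin θ - k₀ * cos θ) := by
    rcases (mul_ne_zero hB hk₀).lt_or_gt with h | h
    · exact ⟨0, by rw [sin_zero, cos_zero]; linarith⟩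
    · exact ⟨π, by rw [sin_pi, cos_pi]; linarith⟩
  refine ⟨B * (α * sin θ - k₀ * cos θ) / (α ^ 2 + k₀ ^ 2), by positivity,
    (frequently_sin_cos_log_eq hk₀ k₁ θ).mono fun R ⟨hs, hc⟩ => ?_⟩
  rw [sinLogPrimitive, hs, hc]
  ring

theorem isBigO_integral_of_isBigO {u v : ℝ → ℝ} {a : ℝ}
    (hu : ∀ b, a ≤ b → IntervalIntegrable u volume a b)
    (hv : ∀ b, a ≤ b → IntervalIntegrable v volume a b)
    (huv : u =O[atTop] v) (hv_nonneg : ∀ᶠ r in atTop, 0 ≤ v r)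
    (hv_tendsto : Tendsto (fun R => ∫ r in a..R, v r) atTop atTop) :
    (fun R => ∫ r in a..R, u r) =O[atTop] fun R => ∫ r in a..R, v r := by
  obtain ⟨c, -, hc⟩ := huv.exists_nonneg
  obtain ⟨b₀, hb₀⟩ := eventually_atTop.1 (hc.bound.and hv_nonneg)
  set b := max a b₀
  have hab : a ≤ b := le_max_left _ _
  have hb : ∀ r, b ≤ r → ‖u r‖ ≤ c * v r ∧ 0 ≤ v r := fun r hr => by
    obtain ⟨hle, hnonneg⟩ := hb₀ r ((le_max_right _ _).trans hr)
    rw [norm_of_nonneg hnonneg] at hle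
    exact ⟨hle, hnonneg⟩
  have hconst : ∀ C : ℝ, (fun _ => C) =O[atTop] fun R => ∫ r in a..R, v r := fun C =>
    (isLittleO_const_left.2 (Or.inr (tendsto_norm_atTop_atTop.comp hv_tendsto))).isBigO
  have htail : (fun R => ∫ r in b..R, u r) =O[atTop] fun R => ∫ r in b..R, v r := by
    refine IsBigO.of_bound c ((eventually_ge_atTop b).mono fun R hR => ?_)
    rw [norm_of_nonneg (intervalIntegral.integral_nonneg hR fun r hr => (hb r hr.1).2),
      ← intervalIntegral.integral_const_mul]
    exact intervalIntegral.norm_integral_le_of_norm_le hR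
      (Eventually.of_forall fun r hr => (hb r hr.1.le).1)
      (((hv b hab).symm.trans (hv R (hab.trans hR))).const_mul c)
  have hv_tail : (fun R => ∫ r in b..R, v r) =O[atTop] fun R => ∫ r in a..R, v r :=
    ((isBigO_refl _ _).sub (hconst (∫ r in a..b, v r))).congr'
      ((eventually_ge_atTop b).mono fun R hR =>
        integral_interval_sub_left (hv R (hab.trans hR)) (hv b hab))
      EventuallyEq.rfl
  refine ((hconst (∫ r in a..b, u r)).add (htail.trans hv_tail)).congr' ?_ EventuallyEq.rfl
  filter_upwards [eventually_ge_atTop b] with R hR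
  exact integral_add_adjacent_intervals (hu b hab) ((hu b hab).symm.trans (hu R (hab.trans hR)))

theorem rpow_neg_mul_sub_div {R : ℝ} (hR : 0 < R) (I A a : ℝ) :
    R ^ (-a) * (I - A * R ^ a / a) = R ^ (-a) * I - A / a := by
  rw [rpow_neg hR.le]
  field_simp

noncomputable def oscillatingProfile (α A B k₀ k₁ r : ℝ) : ℝ :=
  A * r ^ (2 * α - 1) + B * (r ^ (α - 1) * sin (k₀ * log r + k₁))

section OscillatingExpansion

variable {f : ℝ → ℝ} {α A B k₀ k₁ : ℝ}

theorem continuousOn_oscillatingProfile (α A B k₀ k₁ : ℝ) :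
    ContinuousOn (oscillatingProfile α A B k₀ k₁) (Ioi 0) :=
  (continuousOn_const.mul (continuousOn_id.rpow_const fun _ hx => Or.inl (ne_of_gt hx))).add
    (continuousOn_const.mul (continuousOn_rpow_mul_sin_log _ k₀ k₁))

theorem integral_oscillatingProfile (hα : 0 < α) {a b : ℝ} (ha : 0 < a) (hb : 0 < b) :
    ∫ r in a..b, oscillatingProfile α A B k₀ k₁ r =
      A * (b ^ (2 * α) - a ^ (2 * α)) / (2 * α)
        + B * (sinLogPrimitive α k₀ k₁ b - sinLogPrimitive α k₀ k₁ a) := by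
  have hpos : uIcc a b ⊆ Ioi 0 := fun x hx => (lt_min ha hb).trans_le hx.1
  have h₁ : IntervalIntegrable (fun r => r ^ (2 * α - 1)) volume a b :=
    intervalIntegrable_rpow (Or.inr fun h => lt_irrefl (0 : ℝ) (hpos h))
  have h₂ := ((continuousOn_rpow_mul_sin_log (α - 1) k₀ k₁).mono hpos).intervalIntegrable
    (μ := volume)
  simp only [oscillatingProfile]
  rw [intervalIntegral.integral_add (h₁.const_mul A) (h₂.const_mul B),
    intervalIntegral.integral_const_mul, intervalIntegral.integral_const_mul,
    integral_rpow (Or.inl (by linarith)), sub_add_cancel,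
    integral_rpow_mul_sin_log k₁ (by positivity) ha hb, mul_div_assoc]

theorem isBigO_integral_sub_sinLogPrimitive (hf : ContinuousOn f (Ici 0)) (hα : 0 < α)
    (hexp : (fun r => f r - oscillatingProfile α A B k₀ k₁ r) =O[atTop] fun r => r⁻¹) :
    (fun R => (∫ r in (0)..R, f r) - A * R ^ (2 * α) / (2 * α) - B * sinLogPrimitive α k₀ k₁ R)
      =O[atTop] log := by
  set P := oscillatingProfile α A B k₀ k₁
  have hsub : ∀ R : ℝ, 1 ≤ R → uIcc 1 R ⊆ Ioi 0 := fun R hR x hx =>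
    zero_lt_one.trans_le (by rw [uIcc_of_le hR] at hx; exact hx.1)
  have hf₀ : IntervalIntegrable f volume 0 1 :=
    (hf.mono (by rw [uIcc_of_le zero_le_one]; exact Icc_subset_Ici_self)).intervalIntegrable
  have hf₁ : ∀ R : ℝ, 1 ≤ R → IntervalIntegrable f volume 1 R := fun R hR =>
    (hf.mono ((hsub R hR).trans Ioi_subset_Ici_self)).intervalIntegrable
  have hP₁ : ∀ R : ℝ, 1 ≤ R → IntervalIntegrable P volume 1 R := fun R hR =>
    ((continuousOn_oscillatingProfile α A B k₀ k₁).mono (hsub R hR)).intervalIntegrable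
  have hlog : ∀ R : ℝ, 0 < R → ∫ r in (1)..R, r⁻¹ = log R := fun R hR => by
    rw [integral_inv_of_pos one_pos hR, div_one]
  have hinv : ∀ R : ℝ, 1 ≤ R → IntervalIntegrable (fun r => r⁻¹) volume 1 R := fun R hR =>
    (continuousOn_inv₀.mono ((hsub R hR).trans fun _ hx => ne_of_gt hx)).intervalIntegrable
  have hrem : (fun R => ∫ r in (1)..R, f r - P r) =O[atTop] log :=
    (isBigO_integral_of_isBigO (fun R hR => (hf₁ R hR).sub (hP₁ R hR)) hinv
      hexp ((eventually_gt_atTop 0).mono fun r hr => (inv_pos.2 hr).le)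
      (tendsto_log_atTop.congr' ((eventually_gt_atTop 0).mono fun R hR => (hlog R hR).symm))).congr'
      EventuallyEq.rfl ((eventually_gt_atTop 0).mono hlog)
  have hconst : (fun _ => (∫ r in (0)..1, f r) - A / (2 * α) - B * sinLogPrimitive α k₀ k₁ 1)
      =O[atTop] log :=
    (isLittleO_const_left.2 (Or.inr (tendsto_norm_atTop_atTop.comp tendsto_log_atTop))).isBigO
  refine (hconst.add hrem).congr' ?_ EventuallyEq.rfl
  filter_upwards [eventually_ge_atTop 1] with R hR
  rw [intervalIntegral.integral_sub (hf₁ R hR) (hP₁ R hR),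
    integral_oscillatingProfile hα one_pos (zero_lt_one.trans_le hR), one_rpow,
    ← integral_add_adjacent_intervals hf₀ (hf₁ R hR)]
  field_simp
  ring

theorem isBigO_integral_sub_rpow (hf : ContinuousOn f (Ici 0)) (hα : 0 < α)
    (hexp : (fun r => f r - oscillatingProfile α A B k₀ k₁ r) =O[atTop] fun r => r⁻¹) :
    (fun R => (∫ r in (0)..R, f r) - A * R ^ (2 * α) / (2 * α)) =O[atTop] fun R => R ^ α :=
  (((isBigO_integral_sub_sinLogPrimitive hf hα hexp).trans (isLittleO_log_rpow_atTop hα).isBigO).add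
    ((isBigO_sinLogPrimitive α k₀ k₁).const_mul_left B)).congr_left fun R => by ring

theorem tendsto_rpow_neg_mul_integral (hf : ContinuousOn f (Ici 0)) (hα : 0 < α)
    (hexp : (fun r => f r - oscillatingProfile α A B k₀ k₁ r) =O[atTop] fun r => r⁻¹) :
    Tendsto (fun R => R ^ (-(2 * α)) * ∫ r in (0)..R, f r) atTop (𝓝 (A / (2 * α))) := by
  have hdecay : Tendsto (fun R : ℝ => R ^ (-(2 * α)) * R ^ α) atTop (𝓝 0) :=
    (tendsto_rpow_neg_atTop hα).congr' ((eventually_gt_atTop 0).mono fun R hR => by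
      beta_reduce; rw [← rpow_add hR, show -(2 * α) + α = -α by ring])
  have h := ((isBigO_refl (fun R : ℝ => R ^ (-(2 * α))) atTop).mul
    (isBigO_integral_sub_rpow hf hα hexp)).trans_tendsto hdecay
  simpa using (h.congr' ((eventually_gt_atTop 0).mono fun R hR =>
    rpow_neg_mul_sub_div hR _ _ _)).add_const (A / (2 * α))

theorem frequently_lt_rpow_neg_mul_integral (hf : ContinuousOn f (Ici 0)) (hα : 0 < α)
    (hexp : (fun r => f r - oscillatingProfile α A B k₀ k₁ r) =O[atTop] fun r => r⁻¹)
    (hB : B ≠ 0) (hk₀ : k₀ ≠ 0) :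
    ∃ᶠ R in atTop, A / (2 * α) < R ^ (-(2 * α)) * ∫ r in (0)..R, f r := by
  obtain ⟨c, hc, hres⟩ := exists_frequently_mul_sinLogPrimitive_eq hB hk₀ α k₁
  have hclose := ((isBigO_integral_sub_sinLogPrimitive hf hα hexp).trans_isLittleO
    (isLittleO_log_rpow_atTop hα)).bound (half_pos hc)
  refine (hres.and_eventually (hclose.and (eventually_gt_atTop 0))).mono ?_
  rintro R ⟨hG, hsmall, hR⟩
  have hRα : 0 < R ^ α := rpow_pos_of_pos hR α
  rw [norm_of_nonneg hRα.le, Real.norm_eq_abs, hG] at hsmall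
  rw [← sub_pos, ← rpow_neg_mul_sub_div hR]
  refine mul_pos (rpow_pos_of_pos hR _) ?_
  linarith [(abs_le.1 hsmall).1, mul_pos hc hRα]

end OscillatingExpansion

theorem isBigO_exp_sub_one_sub {ι : Type*} {l : Filter ι} {ψ g h : ι → ℝ}
    (hh : Tendsto h l (𝓝 0)) (hg : g =O[l] h) (hψg : (fun x => ψ x - g x) =O[l] fun x => h x ^ 2) :
    (fun x => exp (ψ x) - 1 - g x) =O[l] fun x => h x ^ 2 := by
  have hh2 : (fun x => h x ^ 2) =O[l] h := by
    simpa [sq] using (isBigO_refl h l).mul (hh.isBigO_one ℝ)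
  have hψ : ψ =O[l] h := (hg.add (hψg.trans hh2)).congr_left fun x => by ring
  have hexp : (fun x => exp (ψ x) - 1 - ψ x) =O[l] fun x => ψ x ^ 2 := by
    simpa [Finset.sum_range_succ, sub_sub, Function.comp_def] using
      (Real.exp_sub_sum_range_isBigO_pow 2).comp_tendsto (hψ.trans_tendsto hh)
  exact ((hexp.trans (hψ.pow 2)).add hψg).congr_left fun x => by ring

theorem isBigO_rpow_mul_exp_sub {ψ : ℝ → ℝ} {α C₀ k₀ k₁ : ℝ} (A : ℝ) (hα : 0 < α)
    (hψ : (fun r => ψ r - C₀ * r ^ (-α) * sin (k₀ * log r + k₁)) =O[atTop]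
      fun r => r ^ (2 * -α)) :
    (fun r => A * r ^ (2 * α - 1) * exp (ψ r) - oscillatingProfile α A (A * C₀) k₀ k₁ r)
      =O[atTop] fun r => r⁻¹ := by
  have hg : (fun r => C₀ * r ^ (-α) * sin (k₀ * log r + k₁)) =O[atTop] fun r => r ^ (-α) := by
    refine IsBigO.of_bound |C₀| (Eventually.of_forall fun r => ?_)
    rw [norm_mul, norm_mul, Real.norm_eq_abs C₀]
    exact mul_le_of_le_one_right (by positivity) (abs_sin_le_one _)
  have hsq : ∀ᶠ r : ℝ in atTop, r ^ (2 * -α) = (r ^ (-α)) ^ 2 :=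
    (eventually_ge_atTop 0).mono fun r hr => by
      rw [mul_comm, ← rpow_mul_natCast hr]; norm_num
  have h := (isBigO_refl (fun r => A * r ^ (2 * α - 1)) atTop).mul
    (isBigO_exp_sub_one_sub (tendsto_rpow_neg_atTop hα) hg (hψ.congr' EventuallyEq.rfl hsq))
  refine (h.congr' ?_ ?_).trans ((isBigO_refl _ _).const_mul_left A)
  · filter_upwards [eventually_gt_atTop 0] with r hr
    rw [oscillatingProfile, show α - 1 = 2 * α - 1 + -α by ring, rpow_add hr]
    ring
  · filter_upwards [eventually_gt_atTop 0] with r hr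
    rw [sq, mul_assoc A, ← rpow_add hr, ← rpow_add hr, show 2 * α - 1 + (-α + -α) = -1 by ring,
      rpow_neg_one]

theorem bddAbove_rpow_mul_integral_pow_mul {g : ℝ → ℝ} (hg : ContinuousOn g (Ici 0)) {d : ℕ}
    (hd : 0 < d) {p : ℝ} (hp : 0 ≤ p + d) (b : ℝ) :
    BddAbove ((fun R => R ^ p * ∫ r in (0)..R, r ^ (d - 1) * g r) '' Ioc 0 b) := by
  obtain ⟨K, hK⟩ := (isCompact_Icc (a := 0) (b := b)).exists_bound_of_continuousOn
    (hg.mono Icc_subset_Ici_self)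
  refine ⟨K * b ^ (p + d), ?_⟩
  rintro _ ⟨R, ⟨hR0, hRb⟩, rfl⟩
  have hK0 : 0 ≤ K := (norm_nonneg _).trans (hK R ⟨hR0.le, hRb⟩)
  have hint : ‖∫ r in (0)..R, r ^ (d - 1) * g r‖ ≤ R ^ (d - 1) * K * |R - 0| := by
    refine intervalIntegral.norm_integral_le_of_norm_le_const fun r hr => ?_
    rw [uIoc_of_le hR0.le] at hr
    rw [norm_mul, norm_pow, Real.norm_of_nonneg hr.1.le]
    exact mul_le_mul (pow_le_pow_left₀ hr.1.le hr.2 _) (hK r ⟨hr.1.le, hr.2.trans hRb⟩)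
      (norm_nonneg _) (pow_nonneg hR0.le _)
  have hRpow : R ^ p * (R ^ (d - 1) * K * |R - 0|) = K * R ^ (p + d) := by
    rw [sub_zero, abs_of_pos hR0, rpow_add hR0, rpow_natCast,
      show d = d - 1 + 1 from (Nat.sub_add_cancel hd).symm]
    simp only [pow_succ, Nat.add_sub_cancel]
    ring
  calc R ^ p * ∫ r in (0)..R, r ^ (d - 1) * g r
      ≤ R ^ p * ‖∫ r in (0)..R, r ^ (d - 1) * g r‖ :=
        mul_le_mul_of_nonneg_left (Real.le_norm_self _) (rpow_nonneg hR0.le _)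
    _ ≤ K * R ^ (p + d) := hRpow ▸ mul_le_mul_of_nonneg_left hint (rpow_nonneg hR0.le _)
    _ ≤ K * b ^ (p + d) := by gcongr

theorem bddAbove_image_Ioi_of_tendsto {M : ℝ → ℝ} {L : ℝ} (hM : Tendsto M atTop (𝓝 L))
    (hloc : ∀ b, BddAbove (M '' Ioc 0 b)) : BddAbove (M '' Ioi 0) := by
  obtain ⟨b, hb⟩ := eventually_atTop.1 (hM.eventually (eventually_le_nhds (lt_add_one L)))
  refine ((hloc b).union (⟨L + 1, ?_⟩ : BddAbove (M '' Ici b))).mono ?_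
  · rintro _ ⟨R, hR, rfl⟩
    exact hb R hR
  · rw [← image_union]
    exact image_mono fun R hR => (le_or_gt R b).imp (fun h => ⟨hR, h⟩) le_of_lt

theorem isBigO_rpow_rpow_atTop_of_le {a b : ℝ} (hab : a ≤ b) :
    (fun r : ℝ => r ^ a) =O[atTop] fun r => r ^ b := by
  refine IsBigO.of_bound 1 ((eventually_ge_atTop 1).mono fun r hr => ?_)
  rw [one_mul, norm_of_nonneg (rpow_nonneg (zero_le_one.trans hr) _),
    norm_of_nonneg (rpow_nonneg (zero_le_one.trans hr) _)]
  exact rpow_le_rpow_of_exponent_le hr hab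

theorem isBigO_rpow_of_abs_sub_le {F : ℝ → ℝ} {C₁ C' ν μ R₁ : ℝ} (hνμ : ν ≤ μ)
    (h : ∀ r, R₁ ≤ r → |F r - C₁ * r ^ ν| ≤ C' * r ^ μ) : F =O[atTop] fun r => r ^ μ := by
  have hrem : (fun r => F r - C₁ * r ^ ν) =O[atTop] fun r => r ^ μ :=
    IsBigO.of_bound |C'| <| (eventually_ge_atTop R₁).mono fun r hr =>
      (h r hr).trans ((le_abs_self _).trans (abs_mul _ _).le)
  exact (hrem.add ((isBigO_rpow_rpow_atTop_of_le hνμ).const_mul_left C₁)).congr_left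
    fun r => by ring

theorem mul_rpow_mul_exp_add_mul_log_sub_log {r A : ℝ} (hr : 0 < r) (hA : 0 < A) (p q x : ℝ) :
    A * r ^ p * exp (x + q * log r - log A) = r ^ (p + q) * exp x := by
  rw [exp_sub, exp_add, exp_log hA, rpow_add hr, rpow_def_of_pos hr q, mul_comm (log r) q]
  field_simp

theorem stmt19_general (d : ℕ) (hd5 : 5 ≤ d) (τ : ℝ)
    (hτ : τ = -(((d : ℝ) - 4) / 2))
    (φ : ℝ → ℝ) (hφ_cont : ContinuousOn φ (Set.Ici 0))
    (C₀ k₀ k₁ C₁ ν R₁ C' : ℝ)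
    (hC₀ : C₀ ≠ 0) (hk₀ : k₀ ≠ 0) (hν : ν < 2 - (d : ℝ))
    (hexp : ∀ r : ℝ, R₁ ≤ r →
      |φ r + 4 * Real.log r - Real.log (8 * ((d : ℝ) - 4) * ((d : ℝ) - 2))
          - C₀ * r ^ τ * Real.sin (k₀ * Real.log r + k₁) - C₁ * r ^ ν|
        ≤ C' * r ^ (2 * τ)) :
    Filter.Tendsto
      (fun R : ℝ => R ^ ((4 : ℝ) - (d : ℝ)) * ∫ r in (0 : ℝ)..R, r ^ (d - 1) * Real.exp (φ r))
      Filter.atTop (nhds (8 * ((d : ℝ) - 2))) ∧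
    (∃ᶠ R in Filter.atTop,
      8 * ((d : ℝ) - 2)
        < R ^ ((4 : ℝ) - (d : ℝ)) * ∫ r in (0 : ℝ)..R, r ^ (d - 1) * Real.exp (φ r)) ∧
    BddAbove ((fun R : ℝ =>
      R ^ ((4 : ℝ) - (d : ℝ)) * ∫ r in (0 : ℝ)..R, r ^ (d - 1) * Real.exp (φ r)) ''
        Set.Ioi 0) ∧
    8 * ((d : ℝ) - 2) < sSup ((fun R : ℝ =>
      R ^ ((4 : ℝ) - (d : ℝ)) * ∫ r in (0 : ℝ)..R, r ^ (d - 1) * Real.exp (φ r)) ''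
        Set.Ioi 0) := by
  have hd : (5 : ℝ) ≤ d := by exact_mod_cast hd5
  subst hτ
  set α : ℝ := ((d : ℝ) - 4) / 2 with hα_def
  set A : ℝ := 8 * ((d : ℝ) - 4) * ((d : ℝ) - 2)
  have hα : 0 < α := by linarith
  have hA : 0 < A := by nlinarith
  have hf : (fun r => r ^ (d - 1) * exp (φ r) - oscillatingProfile α A (A * C₀) k₀ k₁ r)
      =O[atTop] fun r => r⁻¹ := by
    refine (isBigO_rpow_mul_exp_sub A hα
      (isBigO_rpow_of_abs_sub_le (by linarith) hexp)).congr' ?_ EventuallyEq.rfl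
    filter_upwards [eventually_gt_atTop 0] with r hr
    have hdeg : 2 * α - 1 + 4 = ((d - 1 : ℕ) : ℝ) := by rw [Nat.cast_sub (by omega)]; ring
    rw [mul_rpow_mul_exp_add_mul_log_sub_log hr hA, hdeg, rpow_natCast]
  have hcont : ContinuousOn (fun r => r ^ (d - 1) * exp (φ r)) (Ici 0) := by fun_prop
  rw [show (4 : ℝ) - d = -(2 * α) by ring, show 8 * ((d : ℝ) - 2) = A / (2 * α) by field_simp; ring]
  have htend := tendsto_rpow_neg_mul_integral hcont hα hf
  have hfreq := frequently_lt_rpow_neg_mul_integral hcont hα hf (mul_ne_zero hA.ne' hC₀) hk₀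
  have hbdd := bddAbove_image_Ioi_of_tendsto htend fun b =>
    bddAbove_rpow_mul_integral_pow_mul (by fun_prop) (by omega) (by linarith) b
  obtain ⟨R, hR, hR0⟩ := (hfreq.and_eventually (eventually_gt_atTop 0)).exists
  exact ⟨htend, hfreq, hbdd, hR.trans_le (le_csSup hbdd ⟨R, hR0, rfl⟩)⟩

/-- Supercritical Morrey value of the oscillating stationary profile
in intermediate dimensions `5 ≤ d ≤ 12`: the Morrey quantity
`R^{4−d} ∫_0^R r^{d−1} e^{φ(r)} dr` tends to `8(d−2)`, exceeds `8(d−2)` for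
arbitrarily large `R`, and its supremum over `R > 0` is finite and `> 8(d−2)`. -/
theorem stmt19 (d : ℕ) (hd5 : 5 ≤ d) (hd12 : d ≤ 12) (τ : ℝ)
    (hτ : τ = -(((d : ℝ) - 4) / 2))
    (φ : ℝ → ℝ) (hφ_cont : ContinuousOn φ (Set.Ici 0))
    (C₀ k₀ k₁ C₁ ν R₁ C' : ℝ)
    (hC₀ : C₀ ≠ 0) (hk₀ : k₀ ≠ 0) (hν : ν < 2 - (d : ℝ)) (hR₁ : 1 ≤ R₁) (hC' : 0 < C')
    (hexp : ∀ r : ℝ, R₁ ≤ r →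
      |φ r + 4 * Real.log r - Real.log (8 * ((d : ℝ) - 4) * ((d : ℝ) - 2))
          - C₀ * r ^ τ * Real.sin (k₀ * Real.log r + k₁) - C₁ * r ^ ν|
        ≤ C' * r ^ (2 * τ)) :
    Filter.Tendsto
      (fun R : ℝ => R ^ ((4 : ℝ) - (d : ℝ)) * ∫ r in (0 : ℝ)..R, r ^ (d - 1) * Real.exp (φ r))
      Filter.atTop (nhds (8 * ((d : ℝ) - 2))) ∧
    (∃ᶠ R in Filter.atTop,
      8 * ((d : ℝ) - 2)
        < R ^ ((4 : ℝ) - (d : ℝ)) * ∫ r in (0 : ℝ)..R, r ^ (d - 1) * Real.exp (φ r)) ∧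
    BddAbove ((fun R : ℝ =>
      R ^ ((4 : ℝ) - (d : ℝ)) * ∫ r in (0 : ℝ)..R, r ^ (d - 1) * Real.exp (φ r)) ''
        Set.Ioi 0) ∧
    8 * ((d : ℝ) - 2) < sSup ((fun R : ℝ =>
      R ^ ((4 : ℝ) - (d : ℝ)) * ∫ r in (0 : ℝ)..R, r ^ (d - 1) * Real.exp (φ r)) ''
        Set.Ioi 0) :=
  stmt19_general d hd5 τ hτ φ hφ_cont C₀ k₀ k₁ C₁ ν R₁ C' hC₀ hk₀ hν hexp
end
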